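/- arXiv:1803.08959 — 7 statements merged into one kernel-verified Lean document; each statement's English description precedes it below -/
import Mathlib

section
/- Let n ≥ 1 and let π ∈ S_n avoid both 312 and 4321. If π_i = n, then i ∈ {n-2, n-1, n}. -/
/-!
Suppose the maximum sits at position `i` with at least three positions after it. The values there
are all smaller than the maximum, so avoiding 312 (with the maximum playing the role of the 3)
forces them to decrease; then the maximum followed by those three values is a 4321.
-/

open Equiv

/-- `π` contains the pattern whose one-line notation (relative order) is given by `σ`. -/
def ContainsPat {n k : ℕ} (π : Perm (Fin n)) (σ : Fin k → ℕ) : Prop :=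
  ∃ f : Fin k → Fin n, StrictMono f ∧ ∀ a b : Fin k, σ a < σ b ↔ π (f a) < π (f b)

/-- `π` avoids the pattern `σ`. -/
def AvoidsPat {n k : ℕ} (π : Perm (Fin n)) (σ : Fin k → ℕ) : Prop := ¬ ContainsPat π σ

/-- Number of cycles in the disjoint cycle decomposition, fixed points counted as cycles. -/
def cycCount {n : ℕ} (π : Perm (Fin n)) : ℕ :=
  π.cycleType.card + (Finset.univ.filter (fun x => π x = x)).card

/-- Number of fixed points. -/
def fixCount {n : ℕ} (π : Perm (Fin n)) : ℕ :=
  (Finset.univ.filter (fun x => π x = x)).card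

/-- Number of excedances. -/
def excCount {n : ℕ} (π : Perm (Fin n)) : ℕ :=
  (Finset.univ.filter (fun x => x < π x)).card

/-- Number of inversions. -/
def invCount {n : ℕ} (π : Perm (Fin n)) : ℕ :=
  (Finset.univ.filter (fun p : Fin n × Fin n => p.1 < p.2 ∧ π p.2 < π p.1)).card

namespace Equiv.Perm

variable {n : ℕ} (π : Perm (Fin n))

theorem containsPat_312 {x y z : Fin n} (hxy : x < y) (hyz : y < z)
    (hyx : π y < π x) (hzx : π z < π x) (hyz' : π y < π z) : ContainsPat π ![3, 1, 2] := by
  refine ⟨![x, y, z], Fin.strictMono_iff_lt_succ.2 ?_, ?_⟩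
  · intro p; fin_cases p <;> simpa
  · simp only [Fin.lt_def] at *
    intro p q
    fin_cases p <;> fin_cases q <;>
      simp only [Fin.reduceFinMk, Fin.zero_eta, Fin.mk_one, Matrix.cons_val] <;> omega

theorem containsPat_4321 {w x y z : Fin n} (hwx : w < x) (hxy : x < y) (hyz : y < z)
    (hxw : π x < π w) (hyx : π y < π x) (hzy : π z < π y) : ContainsPat π ![4, 3, 2, 1] := by
  refine ⟨![w, x, y, z], Fin.strictMono_iff_lt_succ.2 ?_, ?_⟩
  · intro p; fin_cases p <;> simpa
  · simp only [Fin.lt_def] at *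
    intro p q
    fin_cases p <;> fin_cases q <;>
      simp only [Fin.reduceFinMk, Fin.zero_eta, Fin.mk_one, Matrix.cons_val] <;> omega

theorem apply_lt_of_val_apply_eq {i x : Fin n} (hi : (π i : ℕ) = n - 1) (hx : x ≠ i) :
    π x < π i := by
  have hne : (π x : ℕ) ≠ n - 1 := hi ▸ Fin.val_ne_of_ne (π.injective.ne hx)
  have := (π x).isLt
  rw [Fin.lt_def, hi]
  omega

theorem apply_lt_apply_of_avoidsPat_312 (h : AvoidsPat π ![3, 1, 2]) {x y z : Fin n}
    (hxy : x < y) (hyz : y < z) (hyx : π y < π x) (hzx : π z < π x) : π z < π y :=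
  (lt_or_gt_of_ne (π.injective.ne hyz.ne')).resolve_right
    fun hyz' => h (containsPat_312 π hxy hyz hyx hzx hyz')

end Equiv.Perm

/-- Positions and values are 0-indexed: `π i = n - 1` is `π_(i+1) = n`, and the conclusion says
`i + 1 ∈ {n-2, n-1, n}`. -/
theorem statement3_general (n : ℕ) (π : Perm (Fin n))
    (h1 : AvoidsPat π ![3,1,2]) (h2 : AvoidsPat π ![4,3,2,1])
    (i : Fin n) (hi : (π i : ℕ) = n - 1) :
    (i : ℕ) = n - 3 ∨ (i : ℕ) = n - 2 ∨ (i : ℕ) = n - 1 := by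
  by_contra! hfar
  have hlt : (i : ℕ) + 3 < n := by omega
  let a : Fin n := ⟨i + 1, by omega⟩
  let b : Fin n := ⟨i + 2, by omega⟩
  let c : Fin n := ⟨i + 3, by omega⟩
  have hia : i < a := Fin.lt_def.2 (by simp [a])
  have hab : a < b := Fin.lt_def.2 (by simp [a, b])
  have hbc : b < c := Fin.lt_def.2 (by simp [b, c])
  have hai : π a < π i := π.apply_lt_of_val_apply_eq hi hia.ne'
  have hbi : π b < π i := π.apply_lt_of_val_apply_eq hi (hia.trans hab).ne'
  have hci : π c < π i := π.apply_lt_of_val_apply_eq hi (hia.trans (hab.trans hbc)).ne'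
  have hba := π.apply_lt_apply_of_avoidsPat_312 h1 hia hab hai hbi
  have hcb := π.apply_lt_apply_of_avoidsPat_312 h1 (hia.trans hab) hbc hbi hci
  exact h2 (π.containsPat_4321 hia hab hbc hai hba hcb)

/-- If `π ∈ S_n` avoids 312 and 4321 and `π_i = n` (in one-line notation), then
`i ∈ {n-2, n-1, n}`; here positions and values are 0-indexed, so `π i = n - 1`
corresponds to `π_(i+1) = n` and the conclusion to `i + 1 ∈ {n-2, n-1, n}`. -/
theorem statement3 (n : ℕ) (hn : 1 ≤ n) (π : Perm (Fin n))
    (h1 : AvoidsPat π ![3,1,2]) (h2 : AvoidsPat π ![4,3,2,1])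
    (i : Fin n) (hi : (π i : ℕ) = n - 1) :
    (i : ℕ) = n - 3 ∨ (i : ℕ) = n - 2 ∨ (i : ℕ) = n - 1 :=
  statement3_general n π h1 h2 i hi
end

section
/- Let a_n = |Av_n(312, 4321)|, with the convention a_0 = 1. Then for all n ≥ 4, a_n = 2 a_{n-1} + 2 a_{n-2} - a_{n-3}. -/
open Equiv

/-- `a n` = number of permutations in `Av_n(312, 4321)`. -/
noncomputable def a (n : ℕ) : ℕ :=
  Nat.card {π : Perm (Fin n) // AvoidsPat π ![3,1,2] ∧ AvoidsPat π ![4,3,2,1]}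

/-!
Cut a 312-avoiding permutation at its smallest entry `c`, as `α ++ c :: β`. An entry of `α`
larger than one of `β` would form a 312 with `c`, so `α` takes the values just above `c` and `β`
the rest. If the permutation also avoids the decreasing pattern of length `t + 1`, then so does
`β`, while `α` avoids the one of length `t`, because `c` extends every decreasing subsequence of
`α`; and conversely. For the number `A t n` of such permutations of length `n` this gives
`A (t + 1) (n + 1) = ∑ k ≤ n, A t k * A (t + 1) (n - k)`, hence `A 2 n = 1` and
`A 3 (n + 2) = 2 * A 3 (n + 1)`. As `A 3 (k + 1) - 2 * A 3 k` vanishes except at `k = 0`, the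
convolution for `A 4` collapses to `A 4 (n + 2) = 3 * A 4 (n + 1) - A 4 n`, and two instances of
this give the four-term recurrence.
-/

namespace List

theorem ofFn_comp_sublist {γ : Type*} {n k : ℕ} (g : Fin n → γ) {f : Fin k → Fin n}
    (hf : StrictMono f) : ofFn (g ∘ f) <+ ofFn g := by
  refine sublist_iff_exists_fin_orderEmbedding_get_eq.mpr
    ⟨(Fin.castOrderIso length_ofFn).toOrderEmbedding.trans <|
      (OrderEmbedding.ofStrictMono f hf).trans (Fin.castOrderIso length_ofFn.symm).toOrderEmbedding,
      fun i => ?_⟩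
  simp only [get_ofFn]
  rfl

theorem triple_sublist_append {γ : Type*} {x y z : γ} {l₁ l₂ : List γ}
    (h : [x, y, z] <+ l₁ ++ l₂) :
    [x, y, z] <+ l₁ ∨ [x, y, z] <+ l₂ ∨ x ∈ l₁ ∧ z ∈ l₂ := by
  obtain ⟨s, u, he, hs, hu⟩ := sublist_append_iff.mp h
  rcases s with _ | ⟨a, _ | ⟨b, _ | ⟨d, _ | ⟨e, s⟩⟩⟩⟩ <;>
    simp only [nil_append, cons_append, cons.injEq] at he
  · exact .inr (.inl (he ▸ hu))
  · obtain ⟨rfl, rfl⟩ := he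
    exact .inr (.inr ⟨singleton_sublist.mp hs, hu.subset (by simp)⟩)
  · obtain ⟨rfl, rfl, rfl⟩ := he
    exact .inr (.inr ⟨hs.subset (by simp), singleton_sublist.mp hu⟩)
  · obtain ⟨rfl, rfl, rfl, rfl⟩ := he
    exact .inl (by simpa using hs)
  · simp at he

-- Sorting `α` and `β` separately already sorts `α ++ β`, and a sorted permutation of an
-- interval is the interval itself.
theorem perm_range'_of_append_perm {α β : List ℕ} {s m : ℕ} (h : α ++ β ~ range' s m)
    (hle : ∀ x ∈ α, ∀ y ∈ β, x ≤ y) :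
    α ~ range' s α.length ∧ β ~ range' (s + α.length) β.length := by
  have hα := mergeSort_perm α (fun a b => decide (a ≤ b))
  have hβ := mergeSort_perm β (fun a b => decide (a ≤ b))
  have hsorted : (α.mergeSort (· ≤ ·) ++ β.mergeSort (· ≤ ·)).Pairwise (· ≤ ·) :=
    pairwise_append.mpr ⟨pairwise_mergeSort' _ α, pairwise_mergeSort' _ β,
      fun x hx y hy => hle x (hα.subset hx) y (hβ.subset hy)⟩
  have hm : m = α.length + β.length := by simpa using h.length_eq.symm
  have hsplit := ((hα.append hβ).trans h).eq_of_pairwise' hsorted (pairwise_le_range' 1)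
  rw [hm, ← range'_append_1] at hsplit
  obtain ⟨hα', hβ'⟩ := append_inj hsplit (by simp)
  exact ⟨hα.symm.trans (hα' ▸ .rfl), hβ.symm.trans (hβ' ▸ .rfl)⟩

end List

namespace Av312

open List

def Contains312 (l : List ℕ) : Prop := ∃ x y z : ℕ, [x, y, z] <+ l ∧ y < z ∧ z < x

def HasDecreasingSublist (t : ℕ) (l : List ℕ) : Prop :=
  ∃ w : List ℕ, w <+ l ∧ w.length = t ∧ w.Pairwise (· > ·)

def Avoids (t : ℕ) (l : List ℕ) : Prop := ¬ Contains312 l ∧ ¬ HasDecreasingSublist t l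

variable {t : ℕ} {l l' α β : List ℕ}

theorem Contains312.mono (h : Contains312 l') (hl : l' <+ l) : Contains312 l :=
  let ⟨x, y, z, hs, hyz, hzx⟩ := h
  ⟨x, y, z, hs.trans hl, hyz, hzx⟩

theorem HasDecreasingSublist.mono (h : HasDecreasingSublist t l') (hl : l' <+ l) :
    HasDecreasingSublist t l :=
  let ⟨w, hs, hw, hdec⟩ := h
  ⟨w, hs.trans hl, hw, hdec⟩

theorem Avoids.sublist (h : Avoids t l) (hl : l' <+ l) : Avoids t l' :=
  ⟨fun h' => h.1 (h'.mono hl), fun h' => h.2 (h'.mono hl)⟩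

theorem HasDecreasingSublist.of_succ (h : HasDecreasingSublist (t + 1) l) :
    HasDecreasingSublist t l :=
  let ⟨w, hs, hw, hdec⟩ := h
  ⟨w.tail, (tail_sublist w).trans hs, by simp [hw], hdec.sublist (tail_sublist w)⟩

theorem hasDecreasingSublist_zero (l : List ℕ) : HasDecreasingSublist 0 l :=
  ⟨[], nil_sublist l, rfl, Pairwise.nil⟩

section StrictMono

variable {f : ℕ → ℕ}

theorem contains312_map_iff (hf : StrictMono f) : Contains312 (l.map f) ↔ Contains312 l := by
  constructor
  · rintro ⟨x, y, z, hs, hyz, hzx⟩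
    obtain ⟨w, hw, he⟩ := sublist_map_iff.mp hs
    match w, he with
    | [x', y', z'], he =>
      simp only [map_cons, map_nil, cons.injEq] at he
      obtain ⟨rfl, rfl, rfl, -⟩ := he
      exact ⟨x', y', z', hw, hf.lt_iff_lt.mp hyz, hf.lt_iff_lt.mp hzx⟩
  · rintro ⟨x, y, z, hs, hyz, hzx⟩
    exact ⟨f x, f y, f z, hs.map f, hf hyz, hf hzx⟩

theorem hasDecreasingSublist_map_iff (hf : StrictMono f) :
    HasDecreasingSublist t (l.map f) ↔ HasDecreasingSublist t l := by
  constructor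
  · rintro ⟨w, hs, rfl, hdec⟩
    obtain ⟨w', hw', rfl⟩ := sublist_map_iff.mp hs
    exact ⟨w', hw', (length_map _).symm, pairwise_map.mp hdec |>.imp hf.lt_iff_lt.mp⟩
  · rintro ⟨w, hs, rfl, hdec⟩
    exact ⟨w.map f, hs.map f, length_map _, pairwise_map.mpr (hdec.imp (hf ·))⟩

theorem avoids_map_iff (hf : StrictMono f) : Avoids t (l.map f) ↔ Avoids t l := by
  rw [Avoids, Avoids, contains312_map_iff hf, hasDecreasingSublist_map_iff hf]

end StrictMono

section Glue

variable {c : ℕ}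

theorem Contains312.of_append_cons (hc : ∀ x ∈ α ++ β, c < x)
    (hle : ∀ x ∈ α, ∀ y ∈ β, x ≤ y) (h : Contains312 (α ++ c :: β)) :
    Contains312 α ∨ Contains312 β := by
  obtain ⟨x, y, z, hs, hyz, hzx⟩ := h
  have hy : c ≤ y := by
    have : y ∈ α ++ c :: β := hs.subset (by simp)
    rcases mem_append.mp this with h | h
    · exact (hc y (mem_append_left β h)).le
    · exact (mem_cons.mp h).elim (·.ge) fun h => (hc y (mem_append_right α h)).le
  rcases triple_sublist_append hs with hα | hcβ | ⟨hx, hz⟩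
  · exact .inl ⟨x, y, z, hα, hyz, hzx⟩
  · rcases sublist_cons_iff.mp hcβ with hβ | ⟨r, he, hr⟩
    · exact .inr ⟨x, y, z, hβ, hyz, hzx⟩
    · obtain ⟨rfl, rfl⟩ := cons.inj he
      have := hc y (mem_append_right α (hr.subset (by simp)))
      omega
  · rcases mem_cons.mp hz with rfl | hz
    · omega
    · have := hle x hx z hz
      omega

theorem HasDecreasingSublist.of_append_cons (hc : ∀ x ∈ α ++ β, c < x)
    (hle : ∀ x ∈ α, ∀ y ∈ β, x ≤ y) (h : HasDecreasingSublist (t + 1) (α ++ c :: β)) :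
    HasDecreasingSublist t α ∨ HasDecreasingSublist (t + 1) β := by
  obtain ⟨w, hw, hlen, hdec⟩ := h
  obtain ⟨s, u, rfl, hs, hu⟩ := sublist_append_iff.mp hw
  obtain ⟨hsdec, hudec, hsu⟩ := pairwise_append.mp hdec
  rcases sublist_cons_iff.mp hu with hu | ⟨r, rfl, hr⟩
  · rcases u with _ | ⟨b, u⟩
    · exact .inl (HasDecreasingSublist.of_succ ⟨s, hs, by simpa using hlen, hsdec⟩)
    rcases s with _ | ⟨a, s⟩
    · exact .inr ⟨b :: u, hu, by simpa using hlen, hudec⟩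
    · have := hle a (hs.subset (by simp)) b (hu.subset (by simp))
      have := hsu a (by simp) b (by simp)
      omega
  · rcases r with _ | ⟨b, r⟩
    · exact .inl ⟨s, hs, by simpa using hlen, hsdec⟩
    · have := hc b (mem_append_right α (hr.subset (by simp)))
      have := (pairwise_cons.mp hudec).1 b (by simp)
      omega

theorem avoids_append_cons_iff (hc : ∀ x ∈ α ++ β, c < x) :
    Avoids (t + 1) (α ++ c :: β) ↔
      (∀ x ∈ α, ∀ y ∈ β, x ≤ y) ∧ Avoids t α ∧ Avoids (t + 1) β := by
  constructor
  · intro h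
    refine ⟨fun x hx y hy => ?_, ⟨fun h' => h.1 (h'.mono (sublist_append_left _ _)), ?_⟩,
      h.sublist ((sublist_cons_self c β).trans (sublist_append_right α _))⟩
    · by_contra hyx
      refine h.1 ⟨x, c, y, ?_, hc y (mem_append_right α hy), by omega⟩
      exact (singleton_sublist.mpr hx).append ((singleton_sublist.mpr hy).cons_cons c)
    · rintro ⟨w, hw, rfl, hdec⟩
      refine h.2 ⟨w ++ [c], hw.append (by simp), by simp, pairwise_append.mpr
        ⟨hdec, pairwise_singleton _ _, fun a ha b hb => ?_⟩⟩
      rw [mem_singleton.mp hb]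
      exact hc a (mem_append_left β (hw.subset ha))
  · rintro ⟨hle, hα, hβ⟩
    refine ⟨fun h => ?_, fun h => ?_⟩
    · exact (h.of_append_cons hc hle).elim hα.1 hβ.1
    · exact (h.of_append_cons hc hle).elim hα.2 hβ.2

end Glue

-- Permutations of `{c, …, c + n - 1}` in one-line notation; the offset `c` lets the two blocks
-- of the decomposition at the minimum be counted where they sit.
open scoped Classical in
noncomputable def avoiders (t n c : ℕ) : Finset (List ℕ) :=
  (range' c n).permutations.toFinset.filter (Avoids t)

theorem mem_avoiders {n c : ℕ} : l ∈ avoiders t n c ↔ l ~ range' c n ∧ Avoids t l := by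
  simp [avoiders, mem_permutations]

noncomputable def numAvoiders (t n : ℕ) : ℕ := (avoiders t n 0).card

theorem avoiders_eq_map (t n c : ℕ) :
    avoiders t n c =
      (avoiders t n 0).map ⟨map (c + ·), map_injective_iff.mpr (add_right_injective c)⟩ := by
  ext l
  simp only [Finset.mem_map, mem_avoiders, Function.Embedding.coeFn_mk]
  constructor
  · rintro ⟨hp, hl⟩
    have hl' : (l.map (· - c)).map (c + ·) = l := by
      rw [map_map]
      refine (map_congr_left fun x hx => ?_).trans (map_id l)
      have := (mem_range'_1.mp (hp.subset hx)).1
      show c + (x - c) = x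
      omega
    refine ⟨l.map (· - c), ⟨by simpa [map_sub_range'] using hp.map (· - c), ?_⟩, hl'⟩
    rwa [← avoids_map_iff (f := (c + ·)) (add_right_strictMono), hl']
  · rintro ⟨m, ⟨hp, hm⟩, rfl⟩
    exact ⟨by simpa [map_add_range'] using hp.map (c + ·),
      (avoids_map_iff add_right_strictMono).mpr hm⟩

theorem card_avoiders (t n c : ℕ) : (avoiders t n c).card = numAvoiders t n := by
  rw [avoiders_eq_map, Finset.card_map]; rfl

theorem avoiders_succ (t n c : ℕ) :
    avoiders (t + 1) (n + 1) c =
      ((Finset.range (n + 1)).sigma fun k =>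
        avoiders t k (c + 1) ×ˢ avoiders (t + 1) (n - k) (c + 1 + k)).image
          fun p => p.2.1 ++ c :: p.2.2 := by
  ext l
  simp only [Finset.mem_image, Finset.mem_sigma, Finset.mem_product, Finset.mem_range,
    mem_avoiders, Sigma.exists, Prod.exists]
  constructor
  · rintro ⟨hp, hl⟩
    have hcl : c ∈ l := hp.mem_iff.mpr (mem_range'_1.mpr ⟨le_rfl, by omega⟩)
    obtain ⟨α, β, rfl⟩ := append_of_mem hcl
    have hαβ : α ++ β ~ range' (c + 1) n :=
      (perm_cons c).mp (perm_middle.symm.trans (hp.trans (by rw [range'_succ])))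
    have hc : ∀ x ∈ α ++ β, c < x := fun x hx => (mem_range'_1.mp (hαβ.subset hx)).1
    obtain ⟨hle, hα, hβ⟩ := (avoids_append_cons_iff hc).mp hl
    obtain ⟨hpα, hpβ⟩ := perm_range'_of_append_perm hαβ hle
    have hlen : α.length + β.length = n := by simpa using hαβ.length_eq
    refine ⟨α.length, α, β, ⟨by omega, ⟨hpα, hα⟩, ?_, hβ⟩, rfl⟩
    rwa [show n - α.length = β.length by omega]
  · rintro ⟨k, α, β, ⟨hk, ⟨hpα, hα⟩, hpβ, hβ⟩, rfl⟩
    have hαβ : α ++ β ~ range' (c + 1) n := by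
      simpa [show k + (n - k) = n by omega] using hpα.append hpβ
    have hc : ∀ x ∈ α ++ β, c < x := fun x hx => (mem_range'_1.mp (hαβ.subset hx)).1
    have hle : ∀ x ∈ α, ∀ y ∈ β, x ≤ y := fun x hx y hy => by
      have := mem_range'_1.mp (hpα.subset hx)
      have := mem_range'_1.mp (hpβ.subset hy)
      omega
    exact ⟨perm_middle.trans ((hαβ.cons c).trans (by rw [range'_succ])),
      (avoids_append_cons_iff hc).mpr ⟨hle, hα, hβ⟩⟩

theorem numAvoiders_succ (t n : ℕ) :
    numAvoiders (t + 1) (n + 1) =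
      ∑ k ∈ Finset.range (n + 1), numAvoiders t k * numAvoiders (t + 1) (n - k) := by
  rw [← card_avoiders _ _ 0, avoiders_succ, Finset.card_image_of_injOn, Finset.card_sigma]
  · simp_rw [Finset.card_product, card_avoiders]
  · rintro ⟨k, α, β⟩ hp ⟨k', α', β'⟩ hq he
    simp only [Finset.coe_sigma, Set.mem_sigma_iff, Finset.coe_product, Set.mem_prod,
      Finset.mem_coe, mem_avoiders] at hp hq he
    have h0 : ∀ x ∈ α ++ β, 0 < x := fun x hx => by
      rcases mem_append.mp hx with hx | hx
      · exact (mem_range'_1.mp (hp.2.1.1.subset hx)).1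
      · have := (mem_range'_1.mp (hp.2.2.1.subset hx)).1; omega
    obtain ⟨rfl, -, rfl⟩ := (append_cons_inj_of_notMem
      (fun h => (h0 0 (mem_append_left β h)).false)
      (fun h => (h0 0 (mem_append_right α h)).false)).mp he
    obtain rfl : k = k' := by
      simpa using hp.2.1.1.length_eq.symm.trans hq.2.1.1.length_eq
    rfl

theorem numAvoiders_zero_left (n : ℕ) : numAvoiders 0 n = 0 := by
  rw [numAvoiders, Finset.card_eq_zero, Finset.eq_empty_iff_forall_notMem]
  exact fun l hl => (mem_avoiders.mp hl).2.2 (hasDecreasingSublist_zero l)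

theorem numAvoiders_succ_zero (t : ℕ) : numAvoiders (t + 1) 0 = 1 := by
  have hnil : Avoids (t + 1) [] :=
    ⟨fun ⟨_, _, _, h, _⟩ => by simp at h,
      fun ⟨w, h, hw, _⟩ => by simp [sublist_nil.mp h] at hw⟩
  rw [numAvoiders, Finset.card_eq_one]
  refine ⟨[], Finset.ext fun l => ?_⟩
  simp only [mem_avoiders, range'_zero, perm_nil, Finset.mem_singleton, and_iff_left_iff_imp]
  rintro rfl
  exact hnil

theorem numAvoiders_one_succ (n : ℕ) : numAvoiders 1 (n + 1) = 0 := by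
  simp [numAvoiders_succ, numAvoiders_zero_left]

theorem numAvoiders_two (n : ℕ) : numAvoiders 2 n = 1 := by
  induction n with
  | zero => exact numAvoiders_succ_zero 1
  | succ n ih =>
    simp [numAvoiders_succ 1 n, Finset.sum_range_succ', numAvoiders_one_succ,
      numAvoiders_succ_zero, ih]

theorem numAvoiders_three_succ (n : ℕ) :
    numAvoiders 3 (n + 1) = ∑ k ∈ Finset.range (n + 1), numAvoiders 3 k := by
  rw [numAvoiders_succ 2 n, ← Finset.sum_range_reflect]
  refine Finset.sum_congr rfl fun k hk => ?_
  rw [numAvoiders_two, one_mul, add_tsub_cancel_right,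
    Nat.sub_sub_self (Finset.mem_range_succ_iff.mp hk)]

theorem numAvoiders_three_add_two (n : ℕ) :
    numAvoiders 3 (n + 2) = 2 * numAvoiders 3 (n + 1) := by
  rw [numAvoiders_three_succ (n + 1), Finset.sum_range_succ, ← numAvoiders_three_succ n]
  ring

theorem numAvoiders_four_add_two (n : ℕ) :
    (numAvoiders 4 (n + 2) : ℤ) = 3 * numAvoiders 4 (n + 1) - numAvoiders 4 n := by
  set A : ℕ → ℤ := fun k => numAvoiders 4 k
  set C : ℕ → ℤ := fun k => numAvoiders 3 k
  have hA (n : ℕ) : A (n + 1) = ∑ k ∈ Finset.range (n + 1), C k * A (n - k) := by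
    simp [A, C, numAvoiders_succ 3 n]
  have hC0 : C 0 = 1 := by simp [C, numAvoiders_succ_zero 2]
  have hC (k : ℕ) : C (k + 1) - 2 * C k = if k = 0 then -1 else 0 := by
    rcases k with _ | k
    · simp [C, numAvoiders_three_succ, numAvoiders_succ_zero 2]
    · simp [C, numAvoiders_three_add_two]
  calc A (n + 2)
      = C 0 * A (n + 1) + ∑ k ∈ Finset.range (n + 1), C (k + 1) * A (n - k) := by
        rw [hA (n + 1), Finset.sum_range_succ', add_comm]
        simp
    _ = 3 * A (n + 1) + ∑ k ∈ Finset.range (n + 1), (C (k + 1) - 2 * C k) * A (n - k) := by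
        simp only [sub_mul, Finset.sum_sub_distrib, mul_assoc, ← Finset.mul_sum, ← hA, hC0]
        ring
    _ = 3 * A (n + 1) - A n := by
        simp [hC, sub_eq_add_neg]

theorem hasDecreasingSublist_iff_exists_ofFn {k : ℕ} :
    HasDecreasingSublist k l ↔ ∃ w : Fin k → ℕ, ofFn w <+ l ∧ StrictAnti w := by
  constructor
  · rintro ⟨w, hw, rfl, hdec⟩
    rw [← ofFn_getElem (xs := w)] at hw hdec
    exact ⟨_, hw, fun _ _ hij => pairwise_ofFn.mp hdec hij⟩
  · rintro ⟨w, hw, hanti⟩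
    exact ⟨ofFn w, hw, length_ofFn, pairwise_ofFn.mpr fun _ _ hij => hanti hij⟩

theorem containsPat_iff_exists_sublist {n k : ℕ} (π : Perm (Fin n)) (σ : Fin k → ℕ) :
    ContainsPat π σ ↔
      ∃ w : Fin k → ℕ,
        ofFn w <+ ofFn (fun i => (π i : ℕ)) ∧ ∀ a b, σ a < σ b ↔ w a < w b := by
  constructor
  · rintro ⟨f, hf, hσ⟩
    exact ⟨fun a => π (f a), ofFn_comp_sublist (fun i => (π i : ℕ)) hf, hσ⟩
  · rintro ⟨w, hw, hσ⟩
    obtain ⟨e, he⟩ := sublist_iff_exists_fin_orderEmbedding_get_eq.mp hw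
    let f : Fin k → Fin n := fun a => Fin.cast length_ofFn (e (Fin.cast length_ofFn.symm a))
    have hwf (a : Fin k) : w a = π (f a) := by
      have := he (Fin.cast length_ofFn.symm a)
      simp only [get_ofFn] at this
      exact this
    refine ⟨f, fun a b hab => ?_, fun a b => by rw [hσ, hwf, hwf]; rfl⟩
    have : Fin.cast (length_ofFn (f := w)).symm a < Fin.cast length_ofFn.symm b := hab
    simpa [f] using e.strictMono this

theorem containsPat_312_iff {n : ℕ} (π : Perm (Fin n)) :
    ContainsPat π ![3, 1, 2] ↔ Contains312 (ofFn fun i => (π i : ℕ)) := by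
  rw [containsPat_iff_exists_sublist]
  constructor
  · rintro ⟨w, hw, hσ⟩
    exact ⟨w 0, w 1, w 2, by simpa [ofFn_succ] using hw, (hσ 1 2).mp (by decide),
      (hσ 2 0).mp (by decide)⟩
  · rintro ⟨x, y, z, hs, hyz, hzx⟩
    refine ⟨![x, y, z], by simpa [ofFn_succ] using hs, fun a b => ?_⟩
    fin_cases a <;> fin_cases b <;> simp <;> omega

theorem containsPat_iff_hasDecreasingSublist {n k : ℕ} (π : Perm (Fin n)) {σ : Fin k → ℕ}
    (hσ : StrictAnti σ) :
    ContainsPat π σ ↔ HasDecreasingSublist k (ofFn fun i => (π i : ℕ)) := by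
  rw [containsPat_iff_exists_sublist, hasDecreasingSublist_iff_exists_ofFn]
  refine exists_congr fun w => and_congr_right fun _ => ⟨fun h a b hab => ?_, fun h a b => ?_⟩
  · exact (h b a).mp (hσ hab)
  · rw [hσ.lt_iff_gt, h.lt_iff_gt]

theorem ofFn_perm_range' {n : ℕ} (π : Perm (Fin n)) :
    ofFn (fun i => (π i : ℕ)) ~ range' 0 n := by
  have : ofFn (fun i : Fin n => (i : ℕ)) = range' 0 n := by
    rw [ofFn_eq_map, map_coe_finRange_eq_range, range_eq_range']
  exact this ▸ π.ofFn_comp_perm Fin.val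

theorem a_eq_numAvoiders (n : ℕ) : a n = numAvoiders 4 n := by
  classical
  let toList : Perm (Fin n) → List ℕ := fun π => ofFn fun i => (π i : ℕ)
  have hinj : Function.Injective toList := fun π π' h =>
    Equiv.ext fun i => Fin.ext (congrFun (ofFn_injective h) i)
  have himage : Finset.univ.image toList = (range' 0 n).permutations.toFinset := by
    refine Finset.eq_of_subset_of_card_le (fun l hl => ?_) ?_
    · obtain ⟨π, -, rfl⟩ := Finset.mem_image.mp hl
      exact mem_toFinset.mpr (mem_permutations.mpr (ofFn_perm_range' π))
    · rw [Finset.card_image_of_injective _ hinj, Finset.card_univ, Fintype.card_perm,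
        Fintype.card_fin, toFinset_card_of_nodup (nodup_permutations _ (nodup_range' ..)),
        length_permutations, length_range']
  have hpat (π : Perm (Fin n)) :
      (AvoidsPat π ![3, 1, 2] ∧ AvoidsPat π ![4, 3, 2, 1]) ↔ Avoids 4 (toList π) := by
    rw [AvoidsPat, AvoidsPat, containsPat_312_iff,
      containsPat_iff_hasDecreasingSublist π (σ := ![4, 3, 2, 1]) (by decide)]
    rfl
  rw [a, numAvoiders, avoiders, ← himage, Finset.filter_image,
    Finset.card_image_of_injective _ hinj, Nat.card_eq_fintype_card, Fintype.card_subtype]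
  simp only [hpat]

end Av312

theorem statement4 (n : ℕ) (hn : 4 ≤ n) :
    (a n : ℤ) = 2 * a (n - 1) + 2 * a (n - 2) - a (n - 3) := by
  obtain ⟨m, rfl⟩ : ∃ m, n = m + 3 := ⟨n - 3, by omega⟩
  simp only [Av312.a_eq_numAvoiders, show m + 3 - 1 = m + 2 by omega,
    show m + 3 - 2 = m + 1 by omega, Nat.add_sub_cancel]
  have h₁ := Av312.numAvoiders_four_add_two (m + 1)
  have h₂ := Av312.numAvoiders_four_add_two m
  linarith
end

section
/- Let d_n(k, m, ℓ, j) denote the number of involutions π ∈ I_n(312, 4321) with cyc(π) = k, fix(π) = m, exc(π) = ℓ, and inv(π) = j, with the convention that d_m(·) = 0 whenever any index is negative (and d_0(0,0,0,0) = 1). Then for all n ≥ 4, d_n(k, m, ℓ, j) = d_{n-1}(k-1, m-1, ℓ, j) + d_{n-2}(k-1, m, ℓ-1, j-1) + d_{n-3}(k-2, m-1, ℓ-1, j-3). -/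
open Equiv

/-- `d n k m l j` = number of involutions `π ∈ I_n(312, 4321)` with `cyc π = k`,
`fix π = m`, `exc π = l`, `inv π = j`. -/
noncomputable def d (n k m l j : ℕ) : ℕ :=
  Nat.card {π : Perm (Fin n) // π = π⁻¹ ∧ AvoidsPat π ![3,1,2] ∧ AvoidsPat π ![4,3,2,1] ∧ cycCount π = k ∧
    fixCount π = m ∧ excCount π = l ∧ invCount π = j}

/-- The counts extended to integer indices, equal to `0` when any index is negative
(note `d 0 0 0 0 0 = 1`). -/
noncomputable def dZ (n k m l j : ℤ) : ℤ :=
  if 0 ≤ n ∧ 0 ≤ k ∧ 0 ≤ m ∧ 0 ≤ l ∧ 0 ≤ j then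
    (d n.toNat k.toNat m.toNat l.toNat j.toNat : ℤ) else 0

/-!
In an involution `π ∈ I_n(312, 4321)` with `n ≥ 3` let `v = π n`, so `π v = n`. A position `p`
with `v < p < n` and `π p < v` would make `v p n` a 312, so positions strictly between `v` and `n`
keep their values strictly between `v` and `n`. If `v ≤ n - 3`, the positions `v + 1, v + 2` then
form a 312 with `v`, or a 4321 with `v` and `n`. Hence `v ∈ {n, n - 1, n - 2}`, and in the last case
`π (n - 1) = n - 1`: `π` is a direct sum `σ ⊕ τ` with `τ ∈ {1, 21, 321}`. The map `σ ↦ σ ⊕ τ` is a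
bijection from `I_{n - |τ|}(312, 4321)` onto these involutions, since both patterns start with
their largest entry. Finally `cyc`, `fix`, `exc` and `inv` add over direct sums of involutions
(for `cyc` because `2 cyc = n + fix`), and `τ` contributes `(1, 1, 0, 0)`, `(1, 0, 1, 1)` and
`(2, 1, 1, 3)` respectively.
-/

section Fin

variable {a b : ℕ}

lemma Fin.castAdd_or_natAdd (x : Fin (a + b)) :
    (∃ i, x = Fin.castAdd b i) ∨ ∃ j, x = Fin.natAdd a j :=
  Fin.addCases (fun i => Or.inl ⟨i, rfl⟩) (fun j => Or.inr ⟨j, rfl⟩) x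

@[simp]
lemma Fin.castAdd_lt_castAdd_iff {i j : Fin a} : Fin.castAdd b i < Fin.castAdd b j ↔ i < j :=
  (Fin.strictMono_castAdd b).lt_iff_lt

@[simp]
lemma Fin.castAdd_lt_natAdd (i : Fin a) (j : Fin b) : Fin.castAdd b i < Fin.natAdd a j := by
  simp only [Fin.lt_def, Fin.val_castAdd, Fin.val_natAdd]; omega

@[simp]
lemma Fin.not_natAdd_lt_castAdd (i : Fin a) (j : Fin b) : ¬ Fin.natAdd a j < Fin.castAdd b i :=
  (Fin.castAdd_lt_natAdd i j).asymm

end Fin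

def permDirectSum {a b : ℕ} (σ : Perm (Fin a)) (τ : Perm (Fin b)) : Perm (Fin (a + b)) :=
  finSumFinEquiv.permCongr (σ.sumCongr τ)

infixl:65 " ⊕ₚ " => permDirectSum

section DirectSum

variable {a b : ℕ}

lemma permDirectSum_eq_permCongrHom (σ : Perm (Fin a)) (τ : Perm (Fin b)) :
    σ ⊕ₚ τ = finSumFinEquiv.permCongrHom (Perm.sumCongrHom _ _ (σ, τ)) := rfl

@[simp]
lemma permDirectSum_castAdd (σ : Perm (Fin a)) (τ : Perm (Fin b)) (i : Fin a) :
    (σ ⊕ₚ τ) (Fin.castAdd b i) = Fin.castAdd b (σ i) := by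
  simp [permDirectSum, Equiv.permCongr_apply]

@[simp]
lemma permDirectSum_natAdd (σ : Perm (Fin a)) (τ : Perm (Fin b)) (i : Fin b) :
    (σ ⊕ₚ τ) (Fin.natAdd a i) = Fin.natAdd a (τ i) := by
  simp [permDirectSum, Equiv.permCongr_apply]

lemma permDirectSum_apply_last (σ : Perm (Fin a)) (τ : Perm (Fin (b + 1))) :
    ((σ ⊕ₚ τ) (Fin.last (a + b))).val = a + (τ (Fin.last b)).val := by
  rw [show Fin.last (a + b) = Fin.natAdd a (Fin.last b) from Fin.ext rfl, permDirectSum_natAdd,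
    Fin.val_natAdd]

lemma permDirectSum_inv (σ : Perm (Fin a)) (τ : Perm (Fin b)) : (σ ⊕ₚ τ)⁻¹ = σ⁻¹ ⊕ₚ τ⁻¹ := by
  simp only [permDirectSum_eq_permCongrHom, ← map_inv, Prod.inv_mk]

lemma permDirectSum_inj {σ σ' : Perm (Fin a)} {τ τ' : Perm (Fin b)} :
    σ ⊕ₚ τ = σ' ⊕ₚ τ' ↔ σ = σ' ∧ τ = τ' := by
  simp only [permDirectSum_eq_permCongrHom, EmbeddingLike.apply_eq_iff_eq,
    Perm.sumCongrHom_injective.eq_iff, Prod.mk.injEq]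

lemma exists_eq_permDirectSum {π : Perm (Fin (a + b))} {τ : Perm (Fin b)}
    (h : ∀ i, π (Fin.natAdd a i) = Fin.natAdd a (τ i)) : ∃ σ, π = σ ⊕ₚ τ := by
  set ρ := finSumFinEquiv.symm.permCongr π
  have hρ : Set.MapsTo ρ (Set.range Sum.inr) (Set.range Sum.inr) := by
    rintro _ ⟨i, rfl⟩
    exact ⟨τ i, by simp [ρ, Equiv.permCongr_apply, h]⟩
  obtain ⟨⟨σ, τ'⟩, hστ⟩ := Perm.mem_sumCongrHom_range_of_perm_mapsTo_inl
    ((Perm.perm_mapsTo_inl_iff_mapsTo_inr ρ).mpr hρ)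
  have hπ : π = σ ⊕ₚ τ' := by
    rw [permDirectSum_eq_permCongrHom, hστ]
    ext x
    simp [ρ, Equiv.permCongr_apply]
  refine ⟨σ, hπ.trans (congrArg _ (Equiv.ext fun i => ?_))⟩
  simpa [hπ] using h i

end DirectSum

section Statistics

variable {n a b : ℕ}

lemma fixCount_permDirectSum (σ : Perm (Fin a)) (τ : Perm (Fin b)) :
    fixCount (σ ⊕ₚ τ) = fixCount σ + fixCount τ := by
  simp only [fixCount, Finset.card_filter, Fin.sum_univ_add]
  simp

lemma excCount_permDirectSum (σ : Perm (Fin a)) (τ : Perm (Fin b)) :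
    excCount (σ ⊕ₚ τ) = excCount σ + excCount τ := by
  simp only [excCount, Finset.card_filter, Fin.sum_univ_add]
  simp

lemma invCount_permDirectSum (σ : Perm (Fin a)) (τ : Perm (Fin b)) :
    invCount (σ ⊕ₚ τ) = invCount σ + invCount τ := by
  simp only [invCount, Finset.card_filter, Fintype.sum_prod_type, Fin.sum_univ_add]
  simp

lemma two_mul_cycCount {π : Perm (Fin n)} (hπ : π = π⁻¹) : 2 * cycCount π = n + fixCount π := by
  have hsq : π ^ 2 = 1 := by rw [sq, mul_eq_one_iff_eq_inv, ← hπ]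
  have hcard : π.support.card + fixCount π = n := by
    simpa [fixCount, Perm.support] using
      Finset.card_filter_add_card_filter_not (s := Finset.univ) (fun x => π x ≠ x)
  have hsum := Perm.sum_cycleType π
  rw [Perm.cycleType_of_pow_prime_eq_one hsq, Multiset.sum_replicate, smul_eq_mul] at hsum
  unfold cycCount fixCount at *
  omega

lemma cycCount_permDirectSum {σ : Perm (Fin a)} {τ : Perm (Fin b)} (hσ : σ = σ⁻¹)
    (hτ : τ = τ⁻¹) : cycCount (σ ⊕ₚ τ) = cycCount σ + cycCount τ := by
  have hστ := two_mul_cycCount (show σ ⊕ₚ τ = (σ ⊕ₚ τ)⁻¹ by rw [permDirectSum_inv, ← hσ, ← hτ])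
  have := two_mul_cycCount hσ
  have := two_mul_cycCount hτ
  rw [fixCount_permDirectSum] at hστ
  omega

-- Integer-valued, so that a statistic vector with a negative entry is simply never attained.
def stats (π : Perm (Fin n)) : ℤ × ℤ × ℤ × ℤ :=
  (cycCount π, fixCount π, excCount π, invCount π)

lemma stats_permDirectSum {σ : Perm (Fin a)} {τ : Perm (Fin b)} (hσ : σ = σ⁻¹)
    (hτ : τ = τ⁻¹) : stats (σ ⊕ₚ τ) = stats σ + stats τ := by
  simp [stats, cycCount_permDirectSum hσ hτ, fixCount_permDirectSum, excCount_permDirectSum,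
    invCount_permDirectSum]

end Statistics

section Patterns

variable {m n k : ℕ}

instance (π : Perm (Fin n)) (pat : Fin k → ℕ) : Decidable (AvoidsPat π pat) := by
  unfold AvoidsPat ContainsPat; infer_instance

lemma ContainsPat.map {σ : Perm (Fin m)} {π : Perm (Fin n)} {e : Fin m → Fin n}
    (he : StrictMono e) (hcomm : ∀ x, π (e x) = e (σ x)) {pat : Fin k → ℕ}
    (h : ContainsPat σ pat) : ContainsPat π pat := by
  obtain ⟨f, hf, ho⟩ := h
  exact ⟨e ∘ f, he.comp hf, fun x y => by simp only [Function.comp, hcomm, he.lt_iff_lt, ho]⟩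

lemma containsPat_of_forall_mem_range {σ : Perm (Fin m)} {π : Perm (Fin n)} {e : Fin m → Fin n}
    (he : StrictMono e) (hcomm : ∀ x, π (e x) = e (σ x)) {pat : Fin k → ℕ}
    {f : Fin k → Fin n} (hf : StrictMono f) (ho : ∀ x y, pat x < pat y ↔ π (f x) < π (f y))
    (hrange : ∀ x, f x ∈ Set.range e) : ContainsPat σ pat := by
  choose g hg using hrange
  obtain rfl : f = e ∘ g := funext fun x => (hg x).symm
  refine ⟨g, fun x y hxy => he.lt_iff_lt.mp (hf hxy), fun x y => ?_⟩
  simpa only [Function.comp, hcomm, he.lt_iff_lt] using ho x y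

lemma containsPat_permDirectSum_iff {a b : ℕ} (σ : Perm (Fin a)) {τ : Perm (Fin b)}
    {pat : Fin (k + 1) → ℕ} (hpat : ∀ x, x ≠ 0 → pat x < pat 0) (hτ : AvoidsPat τ pat) :
    ContainsPat (σ ⊕ₚ τ) pat ↔ ContainsPat σ pat := by
  refine ⟨fun ⟨f, hf, ho⟩ => ?_, ContainsPat.map (Fin.strictMono_castAdd b) (by simp)⟩
  rcases Fin.castAdd_or_natAdd (f 0) with ⟨i, hi⟩ | ⟨j, hj⟩
  · -- the other entries take values below that of `f 0`, which lies in the bottom block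
    refine containsPat_of_forall_mem_range (Fin.strictMono_castAdd b) (by simp) hf ho fun x => ?_
    rcases eq_or_ne x 0 with rfl | hx
    · exact ⟨i, hi.symm⟩
    rcases Fin.castAdd_or_natAdd (f x) with ⟨i', hi'⟩ | ⟨j', hj'⟩
    · exact ⟨i', hi'.symm⟩
    · have := (ho x 0).mp (hpat x hx)
      simp [hi, hj'] at this
  · refine absurd (containsPat_of_forall_mem_range (Fin.strictMono_natAdd a) (by simp) hf ho
      fun x => ?_) hτ
    rw [Fin.range_natAdd]
    have : f 0 ≤ f x := hf.monotone (Fin.zero_le x)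
    rw [hj, Fin.le_def, Fin.val_natAdd] at this
    exact le_of_add_le_left this

lemma avoidsPat_permDirectSum_iff {a b : ℕ} (σ : Perm (Fin a)) {τ : Perm (Fin b)}
    {pat : Fin (k + 1) → ℕ} (hpat : ∀ x, x ≠ 0 → pat x < pat 0) (hτ : AvoidsPat τ pat) :
    AvoidsPat (σ ⊕ₚ τ) pat ↔ AvoidsPat σ pat :=
  (containsPat_permDirectSum_iff σ hpat hτ).not

variable {π : Perm (Fin n)}

lemma containsPat_312 {i j k : Fin n} (hij : i < j) (hjk : j < k) (h1 : π j < π k)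
    (h2 : π k < π i) : ContainsPat π ![3, 1, 2] := by
  refine ⟨![i, j, k], Fin.strictMono_iff_lt_succ.mpr fun x => ?_, fun x y => ?_⟩
  · fin_cases x <;> simpa
  · fin_cases x <;> fin_cases y <;> simp <;> order

lemma containsPat_4321 {i j k l : Fin n} (hij : i < j) (hjk : j < k) (hkl : k < l)
    (h1 : π l < π k) (h2 : π k < π j) (h3 : π j < π i) : ContainsPat π ![4, 3, 2, 1] := by
  refine ⟨![i, j, k, l], Fin.strictMono_iff_lt_succ.mpr fun x => ?_, fun x y => ?_⟩
  · fin_cases x <;> simpa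
  · fin_cases x <;> fin_cases y <;> simp <;> order

end Patterns

def involutions312_4321 (n : ℕ) : Set (Perm (Fin n)) :=
  {π | π = π⁻¹ ∧ AvoidsPat π ![3, 1, 2] ∧ AvoidsPat π ![4, 3, 2, 1]}

lemma apply_apply_of_eq_inv {α : Type*} {π : Perm α} (hπ : π = π⁻¹) (x : α) : π (π x) = x := by
  nth_rw 1 [hπ]
  exact π.symm_apply_apply x

lemma permDirectSum_mem_involutions312_4321_iff {a b : ℕ} {σ : Perm (Fin a)} {τ : Perm (Fin b)}
    (hτ : τ ∈ involutions312_4321 b) :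
    σ ⊕ₚ τ ∈ involutions312_4321 (a + b) ↔ σ ∈ involutions312_4321 a := by
  obtain ⟨hτinv, hτ312, hτ4321⟩ := hτ
  simp only [involutions312_4321, Set.mem_ofPred_eq, permDirectSum_inv, permDirectSum_inj,
    ← hτinv, and_true, avoidsPat_permDirectSum_iff σ (by decide) hτ312,
    avoidsPat_permDirectSum_iff σ (by decide) hτ4321]

-- Otherwise `π (last n), p, last n` would be an occurrence of 312.
lemma apply_mem_Ioo_of_mem_Ioo {n : ℕ} {π : Perm (Fin (n + 1))} (hinv : π = π⁻¹)
    (h312 : AvoidsPat π ![3, 1, 2]) {p : Fin (n + 1)}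
    (hp : p ∈ Set.Ioo (π (Fin.last n)) (Fin.last n)) :
    π p ∈ Set.Ioo (π (Fin.last n)) (Fin.last n) := by
  obtain ⟨hvp, hpL⟩ := hp
  have hvL : π (π (Fin.last n)) = Fin.last n := apply_apply_of_eq_inv hinv _
  have hne_v : π p ≠ π (Fin.last n) := π.injective.ne hpL.ne
  have hne_L : π p ≠ Fin.last n := fun h => hvp.ne (π.injective (h.trans hvL.symm)).symm
  refine ⟨lt_of_not_ge fun hle => h312 ?_, Fin.lt_last_iff_ne_last.mpr hne_L⟩
  exact containsPat_312 hvp hpL (lt_of_le_of_ne hle hne_v) (by rw [hvL]; exact hvp.trans hpL)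

lemma apply_last_cases {a : ℕ} {π : Perm (Fin (a + 3))}
    (hπ : π ∈ involutions312_4321 (a + 3)) :
    (π (Fin.last _)).val = a + 2 ∨ (π (Fin.last _)).val = a + 1 ∨
      ((π (Fin.last _)).val = a ∧ (π ⟨a + 1, by omega⟩).val = a + 1) := by
  obtain ⟨hinv, h312, h4321⟩ := hπ
  have between := fun p => apply_mem_Ioo_of_mem_Ioo (p := p) hinv h312
  set L := Fin.last (a + 2)
  set v := π L
  have hvL : π v = L := apply_apply_of_eq_inv hinv L
  have hv := v.isLt
  rcases Nat.lt_or_ge v.val a with hva | hva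
  · exfalso
    set p₁ : Fin (a + 3) := ⟨v.val + 1, by omega⟩
    set p₂ : Fin (a + 3) := ⟨v.val + 2, by omega⟩
    have hv₁ : v < p₁ := Fin.lt_def.mpr (by simp [p₁])
    have h₁₂ : p₁ < p₂ := Fin.lt_def.mpr (by simp [p₁, p₂])
    have h₂L : p₂ < L := Fin.lt_def.mpr (by simp [p₂, L]; omega)
    have h₁ := between p₁ ⟨hv₁, h₁₂.trans h₂L⟩
    have h₂ := between p₂ ⟨hv₁.trans h₁₂, h₂L⟩
    rcases lt_or_gt_of_ne (π.injective.ne h₁₂.ne) with hlt | hgt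
    · exact h312 (containsPat_312 hv₁ h₁₂ hlt (by rw [hvL]; exact h₂.2))
    · exact h4321 (containsPat_4321 hv₁ h₁₂ h₂L h₂.1 hgt (by rw [hvL]; exact h₁.2))
  · rcases Nat.lt_or_ge v.val (a + 1) with hva' | hva'
    · have h := between ⟨a + 1, by omega⟩
        ⟨Fin.lt_def.mpr (by simp; omega), Fin.lt_def.mpr (by simp [L])⟩
      simp only [Set.mem_Ioo, Fin.lt_def, L, Fin.val_last] at h
      omega
    · omega

lemma permDirectSum_cases {a : ℕ} {π : Perm (Fin (a + 3))}
    (hπ : π ∈ involutions312_4321 (a + 3)) :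
    (∃ σ : Perm (Fin (a + 2)), π = σ ⊕ₚ (1 : Perm (Fin 1))) ∨
      (∃ σ : Perm (Fin (a + 1)), π = σ ⊕ₚ (swap 0 1 : Perm (Fin 2))) ∨
      ∃ σ : Perm (Fin a), π = σ ⊕ₚ (swap 0 2 : Perm (Fin 3)) := by
  have hππ := apply_apply_of_eq_inv hπ.1
  rcases apply_last_cases hπ with h | h | ⟨h, h'⟩
  · refine Or.inl (exists_eq_permDirectSum (a := a + 2) (b := 1) (π := π) fun i => ?_)
    fin_cases i
    exact Fin.ext h
  · have hB : π (Fin.last _) = ⟨a + 1, by omega⟩ := Fin.ext h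
    have hA : π ⟨a + 1, by omega⟩ = Fin.last _ := by rw [← hB, hππ]
    refine Or.inr (Or.inl (exists_eq_permDirectSum (a := a + 1) (b := 2) (π := π) fun i => ?_))
    fin_cases i
    exacts [hA, hB]
  · have hC : π (Fin.last _) = ⟨a, by omega⟩ := Fin.ext h
    have hB : π ⟨a + 1, by omega⟩ = ⟨a + 1, by omega⟩ := Fin.ext h'
    have hA : π ⟨a, by omega⟩ = Fin.last _ := by rw [← hC, hππ]
    refine Or.inr (Or.inr (exists_eq_permDirectSum (a := a) (b := 3) (π := π) fun i => ?_))
    fin_cases i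
    exacts [hA, hB, hC]


lemma dZ_eq_card (n : ℕ) (k m l j : ℤ) :
    dZ n k m l j
      = Nat.card {π : Perm (Fin n) // π ∈ involutions312_4321 n ∧ stats π = (k, m, l, j)} := by
  by_cases h : 0 ≤ k ∧ 0 ≤ m ∧ 0 ≤ l ∧ 0 ≤ j
  · obtain ⟨hk, hm, hl, hj⟩ := h
    lift k to ℕ using hk
    lift m to ℕ using hm
    lift l to ℕ using hl
    lift j to ℕ using hj
    simp [dZ, d, stats, involutions312_4321, and_assoc]
  · have : IsEmpty {π : Perm (Fin n) // π ∈ involutions312_4321 n ∧ stats π = (k, m, l, j)} := by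
      refine ⟨fun ⟨π, _, hs⟩ => h ?_⟩
      simp only [stats, Prod.mk.injEq] at hs
      omega
    simp [dZ, h, Nat.card_of_isEmpty]

lemma card_permDirectSum {a b : ℕ} {τ : Perm (Fin b)} (hτ : τ ∈ involutions312_4321 b)
    (s : ℤ × ℤ × ℤ × ℤ) :
    Nat.card {π : Perm (Fin (a + b)) //
        (π ∈ involutions312_4321 (a + b) ∧ stats π = s) ∧ ∃ σ, π = σ ⊕ₚ τ}
      = Nat.card {σ : Perm (Fin a) // σ ∈ involutions312_4321 a ∧ stats σ = s - stats τ} := by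
  symm
  refine Nat.card_eq_of_bijective (fun σ => ⟨σ.1 ⊕ₚ τ, ⟨?_, ?_⟩, σ.1, rfl⟩) ⟨?_, ?_⟩
  · exact (permDirectSum_mem_involutions312_4321_iff hτ).mpr σ.2.1
  · rw [stats_permDirectSum σ.2.1.1 hτ.1, σ.2.2, sub_add_cancel]
  · intro σ σ' h
    exact Subtype.ext (permDirectSum_inj.mp (congrArg Subtype.val h)).1
  · rintro ⟨_, ⟨hπ, hs⟩, σ, rfl⟩
    have hσ := (permDirectSum_mem_involutions312_4321_iff hτ).mp hπ
    refine ⟨⟨σ, hσ, ?_⟩, rfl⟩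
    rw [eq_sub_iff_add_eq, ← stats_permDirectSum hσ.1 hτ.1, hs]

lemma natCard_eq_add_add {α : Type*} [Fintype α] {P A B C : α → Prop}
    (hcover : ∀ x, P x → A x ∨ B x ∨ C x) (hAB : ∀ x, A x → ¬ B x) (hAC : ∀ x, A x → ¬ C x)
    (hBC : ∀ x, B x → ¬ C x) :
    Nat.card {x // P x}
      = Nat.card {x // P x ∧ A x} + Nat.card {x // P x ∧ B x} + Nat.card {x // P x ∧ C x} := by
  classical
  simp only [Nat.card_eq_fintype_card, Fintype.card_subtype, Finset.card_filter,
    ← Finset.sum_add_distrib]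
  refine Finset.sum_congr rfl fun x _ => ?_
  by_cases hP : P x
  · have := hcover x hP
    have := hAB x
    have := hAC x
    have := hBC x
    by_cases A x <;> by_cases B x <;> by_cases C x <;> simp_all
  · simp [hP]

lemma card_eq_sum_tails (a : ℕ) (s : ℤ × ℤ × ℤ × ℤ) :
    Nat.card {π : Perm (Fin (a + 3)) // π ∈ involutions312_4321 (a + 3) ∧ stats π = s}
      = Nat.card {σ : Perm (Fin (a + 2)) //
            σ ∈ involutions312_4321 (a + 2) ∧ stats σ = s - (1, 1, 0, 0)}
        + Nat.card {σ : Perm (Fin (a + 1)) //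
            σ ∈ involutions312_4321 (a + 1) ∧ stats σ = s - (1, 0, 1, 1)}
        + Nat.card {σ : Perm (Fin a) //
            σ ∈ involutions312_4321 a ∧ stats σ = s - (2, 1, 1, 3)} := by
  have h₁ := card_permDirectSum (a := a + 2) (τ := (1 : Perm (Fin 1)))
    ⟨by decide, by decide, by decide⟩ s
  have h₂ := card_permDirectSum (a := a + 1) (τ := (swap 0 1 : Perm (Fin 2)))
    ⟨by decide, by decide, by decide⟩ s
  have h₃ := card_permDirectSum (a := a) (τ := (swap 0 2 : Perm (Fin 3)))
    ⟨by decide, by decide, by decide⟩ s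
  rw [show stats (1 : Perm (Fin 1)) = (1, 1, 0, 0) by decide] at h₁
  rw [show stats (swap 0 1 : Perm (Fin 2)) = (1, 0, 1, 1) by decide] at h₂
  rw [show stats (swap 0 2 : Perm (Fin 3)) = (2, 1, 1, 3) by decide] at h₃
  rw [← h₁, ← h₂, ← h₃]
  refine natCard_eq_add_add (fun π hπ => permDirectSum_cases hπ.1) ?_ ?_ ?_ <;>
    rintro _ ⟨σ, rfl⟩ ⟨σ', h⟩ <;>
    have := congrArg (fun π => (π (Fin.last (a + 2))).val) h <;>
    simp [permDirectSum_apply_last] at this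

theorem statement9 (n : ℕ) (hn : 4 ≤ n) (k m l j : ℤ) :
    dZ n k m l j
      = dZ (n - 1) (k - 1) (m - 1) l j + dZ (n - 2) (k - 1) m (l - 1) (j - 1)
        + dZ (n - 3) (k - 2) (m - 1) (l - 1) (j - 3) := by
  obtain ⟨a, rfl⟩ : ∃ a, n = a + 3 := ⟨n - 3, by omega⟩
  rw [show ((a + 3 : ℕ) : ℤ) - 1 = (a + 2 : ℕ) by push_cast; ring,
    show ((a + 3 : ℕ) : ℤ) - 2 = (a + 1 : ℕ) by push_cast; ring,
    show ((a + 3 : ℕ) : ℤ) - 3 = (a : ℕ) by push_cast; ring,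
    dZ_eq_card, dZ_eq_card, dZ_eq_card, dZ_eq_card, card_eq_sum_tails]
  simp only [Prod.mk_sub_mk, sub_zero, Nat.cast_add]
end

section
/- Let i_n = |I_n(312, 4321)| be the number of involutions in S_n avoiding 312 and 4321, with the convention i_0 = 1. Then for all n ≥ 4, i_n = i_{n-1} + i_{n-2} + i_{n-3}; that is, the i_n satisfy the Tribonacci recurrence (with i_1 = 1, i_2 = 2, i_3 = 4). -/
open Equiv

/-- `i n` = number of involutions in `S_n` avoiding 312 and 4321. -/
noncomputable def i (n : ℕ) : ℕ :=
  Nat.card {π : Perm (Fin n) // π = π⁻¹ ∧ AvoidsPat π ![3,1,2] ∧ AvoidsPat π ![4,3,2,1]}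

/-!
Index positions and values from `0`. Let `ν ∈ I_{n+1}(312)` and `k = ν(n)`. Then `ν(k) = n` is
the largest value, so an ascent to the right of position `k` would complete a `312`; thus `ν`
decreases strictly from `ν(k) = n` down to `ν(n) = k`, i.e. it reverses the block `[k, n]`. Hence
`ν = π ⊕ δ_t` with `π ∈ I_k(312)` and `δ_t` the decreasing permutation of length `t = n + 1 - k`.
Such a direct sum avoids `312` iff `π` does, and avoids `4321` iff `π` does and `t ≤ 3`. So
`I_{m+3}(312, 4321)` is in bijection with `I_{m+2} ⊔ I_{m+1} ⊔ I_m`.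
-/

theorem Fin.exists_castAdd_eq_of_lt {m t : ℕ} {x : Fin (m + t)} (hx : (x : ℕ) < m) :
    ∃ y : Fin m, Fin.castAdd t y = x :=
  ⟨⟨x, hx⟩, rfl⟩

theorem Fin.sub_add_le_of_strictAntiOn {n k : ℕ} {f : Fin n → Fin k} {a b : Fin n} (hab : a ≤ b)
    (hf : StrictAntiOn f (Set.Icc a b)) : (b : ℕ) - a + f b ≤ f a := by
  have hmaps : Set.MapsTo f (Finset.Icc a b) (Finset.Icc (f b) (f a)) := fun x hx => by
    simp only [Finset.coe_Icc, Set.mem_Icc] at hx ⊢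
    exact ⟨hf.antitoneOn hx ⟨hab, le_rfl⟩ hx.2, hf.antitoneOn ⟨le_rfl, hab⟩ hx hx.1⟩
  have hcard := Finset.card_le_card_of_injOn f hmaps (hf.injOn.mono (by simp))
  have hfab : f b ≤ f a := hf.antitoneOn ⟨le_rfl, hab⟩ ⟨hab, le_rfl⟩ hab
  simp only [Fin.card_Icc] at hcard
  omega

theorem containsPat_312_iff {n : ℕ} (π : Perm (Fin n)) :
    ContainsPat π ![3,1,2] ↔ ∃ a b c : Fin n, a < b ∧ b < c ∧ π b < π c ∧ π c < π a := by
  constructor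
  · rintro ⟨f, hf, hσ⟩
    exact ⟨f 0, f 1, f 2, hf (by decide), hf (by decide), (hσ 1 2).1 (by decide),
      (hσ 2 0).1 (by decide)⟩
  · rintro ⟨a, b, c, hab, hbc, hbc', hca⟩
    refine ⟨![a, b, c], Fin.strictMono_iff_lt_succ.2 ?_, fun x y => ?_⟩
    · intro i; fin_cases i <;> assumption
    · fin_cases x <;> fin_cases y <;> simp <;> order

theorem containsPat_4321_iff {n : ℕ} (π : Perm (Fin n)) :
    ContainsPat π ![4,3,2,1] ↔ ∃ a b c d : Fin n, a < b ∧ b < c ∧ c < d ∧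
      π d < π c ∧ π c < π b ∧ π b < π a := by
  constructor
  · rintro ⟨f, hf, hσ⟩
    exact ⟨f 0, f 1, f 2, f 3, hf (by decide), hf (by decide), hf (by decide),
      (hσ 3 2).1 (by decide), (hσ 2 1).1 (by decide), (hσ 1 0).1 (by decide)⟩
  · rintro ⟨a, b, c, d, hab, hbc, hcd, hdc, hcb, hba⟩
    refine ⟨![a, b, c, d], Fin.strictMono_iff_lt_succ.2 ?_, fun x y => ?_⟩
    · intro i; fin_cases i <;> assumption
    · fin_cases x <;> fin_cases y <;> simp <;> order

def IsAvoidingInvolution {n : ℕ} (π : Perm (Fin n)) : Prop :=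
  π = π⁻¹ ∧ AvoidsPat π ![3,1,2] ∧ AvoidsPat π ![4,3,2,1]

abbrev AvoidingInvolution (n : ℕ) := {π : Perm (Fin n) // IsAvoidingInvolution π}

namespace Equiv.Perm

variable {m t n : ℕ}

theorem apply_apply_of_eq_inv {ν : Perm (Fin n)} (h : ν = ν⁻¹) (x : Fin n) : ν (ν x) = x :=
  congrArg (· x) (eq_inv_iff_mul_eq_one.mp h)

theorem strictAntiOn_Ici_of_avoids312 {ν : Perm (Fin (n + 1))} (hinv : ν = ν⁻¹)
    (h312 : AvoidsPat ν ![3,1,2]) : StrictAntiOn ν (Set.Ici (ν (Fin.last n))) := by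
  set k := ν (Fin.last n)
  have hk : ν k = Fin.last n := apply_apply_of_eq_inv hinv _
  intro a (ha : k ≤ a) b _ hab
  have hb : ν b < Fin.last n := by
    refine lt_of_le_of_ne (Fin.le_last _) fun h => (ha.trans_lt hab).ne ?_
    calc k = ν (ν b) := by rw [h]
      _ = b := apply_apply_of_eq_inv hinv b
  by_contra! hba
  rcases ha.eq_or_lt with rfl | hka
  · exact (hk ▸ hba).not_gt hb
  · exact h312 ((containsPat_312_iff ν).2 ⟨k, a, b, hka, hab,
      lt_of_le_of_ne hba (ν.injective.ne hab.ne), hk ▸ hb⟩)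

/-- The strictly decreasing run from `ν k = n` down to `ν n = k` has no room for gaps. -/
theorem val_apply_of_avoids312 {ν : Perm (Fin (n + 1))} (hinv : ν = ν⁻¹)
    (h312 : AvoidsPat ν ![3,1,2]) {j : Fin (n + 1)} (hj : ν (Fin.last n) ≤ j) :
    (ν j : ℕ) = n + ν (Fin.last n) - j := by
  have hanti := strictAntiOn_Ici_of_avoids312 hinv h312
  have upper := Fin.sub_add_le_of_strictAntiOn hj (hanti.mono fun x hx => hx.1)
  have lower := Fin.sub_add_le_of_strictAntiOn (Fin.le_last j)
    (hanti.mono fun x hx => hj.trans hx.1)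
  rw [apply_apply_of_eq_inv hinv] at upper
  simp only [Fin.val_last] at upper lower
  have := Fin.le_def.mp hj
  omega

theorem le_val_apply_last_add_two {ν : Perm (Fin (n + 1))} (hinv : ν = ν⁻¹)
    (h312 : AvoidsPat ν ![3,1,2]) (h4321 : AvoidsPat ν ![4,3,2,1]) :
    n ≤ (ν (Fin.last n) : ℕ) + 2 := by
  by_contra! hn
  set k := ν (Fin.last n)
  let p (i : Fin 4) : Fin (n + 1) := ⟨k + i, by omega⟩
  have hp (i : Fin 4) : p i ∈ Set.Ici k := Fin.le_def.2 (by simp [p])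
  have hpp : StrictMono p := fun i j hij => Fin.mk_lt_mk.2 (Nat.add_lt_add_left hij _)
  have hanti := strictAntiOn_Ici_of_avoids312 hinv h312
  exact h4321 ((containsPat_4321_iff ν).2 ⟨p 0, p 1, p 2, p 3, hpp (by decide), hpp (by decide),
    hpp (by decide), hanti (hp 2) (hp 3) (hpp (by decide)), hanti (hp 1) (hp 2) (hpp (by decide)),
    hanti (hp 0) (hp 1) (hpp (by decide))⟩)

/-- The direct sum `π ⊕ δ_t` of `π` with the decreasing permutation of length `t`. -/
def sumRev (π : Perm (Fin m)) (t : ℕ) : Perm (Fin (m + t)) :=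
  finSumFinEquiv.permCongr (π.sumCongr Fin.revPerm)

theorem sumRev_apply_castAdd (π : Perm (Fin m)) (x : Fin m) :
    sumRev π t (Fin.castAdd t x) = Fin.castAdd t (π x) := by
  simp [sumRev]

theorem sumRev_apply_natAdd (π : Perm (Fin m)) (y : Fin t) :
    sumRev π t (Fin.natAdd m y) = Fin.natAdd m y.rev := by
  simp [sumRev]

theorem val_sumRev_of_lt (π : Perm (Fin m)) {x : Fin (m + t)} (hx : (x : ℕ) < m) :
    (sumRev π t x : ℕ) = π ⟨x, hx⟩ :=
  congrArg Fin.val (sumRev_apply_castAdd π ⟨x, hx⟩)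

theorem val_sumRev_of_le (π : Perm (Fin m)) {x : Fin (m + t)} (hx : m ≤ (x : ℕ)) :
    (sumRev π t x : ℕ) = 2 * m + t - 1 - x := by
  have hxt : (x : ℕ) - m < t := by omega
  rw [show x = Fin.natAdd m ⟨x - m, hxt⟩ from Fin.ext (by simp; omega), sumRev_apply_natAdd]
  simp
  omega

theorem val_sumRev_lt_iff (π : Perm (Fin m)) (x : Fin (m + t)) :
    (sumRev π t x : ℕ) < m ↔ (x : ℕ) < m := by
  rcases lt_or_ge (x : ℕ) m with hx | hx
  · simp [val_sumRev_of_lt π hx, hx]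
  · rw [val_sumRev_of_le π hx]
    omega

theorem val_sumRev_last (π : Perm (Fin m)) : (sumRev π (t + 1) (Fin.last (m + t)) : ℕ) = m := by
  rw [val_sumRev_of_le π (by simp)]
  simp
  omega

theorem sumRev_inv (π : Perm (Fin m)) : (sumRev π t)⁻¹ = sumRev π⁻¹ t := by
  change (finSumFinEquiv.permCongrHom _)⁻¹ = finSumFinEquiv.permCongrHom _
  rw [← map_inv, Perm.sumCongr_inv, Perm.inv_def Fin.revPerm, Fin.revPerm_symm]

theorem sumRev_left_injective : Function.Injective (sumRev · t : Perm (Fin m) → _) := by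
  intro π₁ π₂ h
  refine Equiv.ext fun x => ?_
  simpa [sumRev_apply_castAdd] using
    congrArg (fun ν : Perm (Fin (m + t)) => ν (Fin.castAdd t x)) h

theorem exists_sumRev_eq (ν : Perm (Fin (m + t)))
    (h : ∀ x : Fin (m + t), m ≤ (x : ℕ) → (ν x : ℕ) = 2 * m + t - 1 - x) :
    ∃ π : Perm (Fin m), sumRev π t = ν := by
  have hpre (x : Fin (m + t)) : (ν x : ℕ) < m ↔ (x : ℕ) < m := by
    refine ⟨fun hνx => ?_, fun hx => ?_⟩
    · by_contra! hx
      rw [h x hx] at hνx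
      omega
    · by_contra! hνx
      have := (ν x).is_lt
      have hy : ν ⟨2 * m + t - 1 - ν x, by omega⟩ = ν x :=
        Fin.ext (by rw [h _ (by simp; omega), Fin.val_mk]; omega)
      have := congrArg Fin.val (ν.injective hy)
      simp only at this
      omega
  refine ⟨(Fin.castLEquiv (Nat.le_add_right m t)).symm.permCongr (ν.subtypePerm hpre),
    Equiv.ext fun x => Fin.ext ?_⟩
  rcases lt_or_ge (x : ℕ) m with hx | hx
  · rw [val_sumRev_of_lt _ hx]
    rfl
  · rw [val_sumRev_of_le _ hx, h x hx]

theorem exists_sumRev_eq_of_avoids312 {ν : Perm (Fin (m + t + 1))} (hinv : ν = ν⁻¹)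
    (h312 : AvoidsPat ν ![3,1,2]) (hlast : (ν (Fin.last (m + t)) : ℕ) = m) :
    ∃ π : Perm (Fin m), sumRev π (t + 1) = ν :=
  exists_sumRev_eq (t := t + 1) ν fun x hx => by
    rw [val_apply_of_avoids312 hinv h312 (Fin.le_def.2 (by omega)), hlast]
    omega

theorem _root_.ContainsPat.sumRev {π : Perm (Fin m)} {k : ℕ} {σ : Fin k → ℕ}
    (h : ContainsPat π σ) : ContainsPat (sumRev π t) σ := by
  obtain ⟨f, hf, hσ⟩ := h
  exact ⟨Fin.castAdd t ∘ f, (Fin.strictMono_castAdd t).comp hf, fun a b => by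
    simp [sumRev_apply_castAdd, hσ, (Fin.strictMono_castAdd t).lt_iff_lt]⟩

theorem containsPat_312_sumRev_iff (π : Perm (Fin m)) :
    ContainsPat (sumRev π t) ![3,1,2] ↔ ContainsPat π ![3,1,2] := by
  refine ⟨fun h => ?_, ContainsPat.sumRev⟩
  obtain ⟨a, b, c, hab, hbc, hbc', hca⟩ := (containsPat_312_iff _).1 h
  have ha : (a : ℕ) < m := by
    by_contra! ha
    rw [Fin.lt_def, val_sumRev_of_le π (by omega : m ≤ (b : ℕ)),
      val_sumRev_of_le π (by omega : m ≤ (c : ℕ))] at hbc'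
    omega
  have hc : (c : ℕ) < m :=
    (val_sumRev_lt_iff π c).1 ((Fin.lt_def.mp hca).trans ((val_sumRev_lt_iff π a).2 ha))
  obtain ⟨a, rfl⟩ := Fin.exists_castAdd_eq_of_lt ha
  obtain ⟨b, rfl⟩ := Fin.exists_castAdd_eq_of_lt (t := t) ((Fin.lt_def.mp hbc).trans hc)
  obtain ⟨c, rfl⟩ := Fin.exists_castAdd_eq_of_lt hc
  simp only [sumRev_apply_castAdd, (Fin.strictMono_castAdd t).lt_iff_lt] at hab hbc hbc' hca
  exact (containsPat_312_iff π).2 ⟨a, b, c, hab, hbc, hbc', hca⟩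

theorem containsPat_4321_sumRev_iff (π : Perm (Fin m)) (ht : t ≤ 3) :
    ContainsPat (sumRev π t) ![4,3,2,1] ↔ ContainsPat π ![4,3,2,1] := by
  refine ⟨fun h => ?_, ContainsPat.sumRev⟩
  obtain ⟨a, b, c, d, hab, hbc, hcd, hdc, hcb, hba⟩ := (containsPat_4321_iff _).1 h
  have ha : (a : ℕ) < m := by
    have := d.is_lt
    rw [Fin.lt_def] at hab hbc hcd
    omega
  have hd : (d : ℕ) < m := (val_sumRev_lt_iff π d).1
    ((Fin.lt_def.mp (hdc.trans (hcb.trans hba))).trans ((val_sumRev_lt_iff π a).2 ha))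
  obtain ⟨a, rfl⟩ := Fin.exists_castAdd_eq_of_lt ha
  obtain ⟨b, rfl⟩ := Fin.exists_castAdd_eq_of_lt (t := t) ((Fin.lt_def.mp (hbc.trans hcd)).trans hd)
  obtain ⟨c, rfl⟩ := Fin.exists_castAdd_eq_of_lt (t := t) ((Fin.lt_def.mp hcd).trans hd)
  obtain ⟨d, rfl⟩ := Fin.exists_castAdd_eq_of_lt hd
  simp only [sumRev_apply_castAdd, (Fin.strictMono_castAdd t).lt_iff_lt] at *
  exact (containsPat_4321_iff π).2 ⟨a, b, c, d, hab, hbc, hcd, hdc, hcb, hba⟩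

theorem isAvoidingInvolution_sumRev_iff (π : Perm (Fin m)) (ht : t ≤ 3) :
    IsAvoidingInvolution (sumRev π t) ↔ IsAvoidingInvolution π := by
  rw [IsAvoidingInvolution, IsAvoidingInvolution, AvoidsPat, AvoidsPat, AvoidsPat, AvoidsPat,
    containsPat_312_sumRev_iff, containsPat_4321_sumRev_iff π ht, sumRev_inv,
    sumRev_left_injective.eq_iff]

end Equiv.Perm

namespace AvoidingInvolution

def sumRev {m : ℕ} (t : ℕ) (ht : t ≤ 3) : AvoidingInvolution m → AvoidingInvolution (m + t) :=
  Subtype.map (Perm.sumRev · t) fun π => (Perm.isAvoidingInvolution_sumRev_iff π ht).2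

def sumRevSum (m : ℕ) :
    AvoidingInvolution (m + 2) ⊕ AvoidingInvolution (m + 1) ⊕ AvoidingInvolution m →
      AvoidingInvolution (m + 3) :=
  Sum.elim (sumRev 1 (by norm_num)) (Sum.elim (sumRev 2 (by norm_num)) (sumRev 3 le_rfl))

theorem sumRev_injective {m t : ℕ} (ht : t ≤ 3) : Function.Injective (sumRev (m := m) t ht) :=
  Subtype.map_injective _ Perm.sumRev_left_injective

theorem sumRevSum_injective (m : ℕ) : Function.Injective (sumRevSum m) := by
  let last (ν : AvoidingInvolution (m + 3)) : ℕ := ν.1 (Fin.last (m + 2))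
  have h1 (π) : last (sumRev 1 (by norm_num) π) = m + 2 := Perm.val_sumRev_last (t := 0) π.1
  have h2 (π) : last (sumRev 2 (by norm_num) π) = m + 1 := Perm.val_sumRev_last (t := 1) π.1
  have h3 (π) : last (sumRev 3 le_rfl π) = m := Perm.val_sumRev_last (t := 2) π.1
  refine (sumRev_injective _).sumElim ((sumRev_injective _).sumElim (sumRev_injective _) ?_) ?_
  · intro π ρ h
    have := h2 π
    rw [h, h3] at this
    omega
  · rintro π (ρ | ρ) h
    · have := h1 π
      rw [h, Sum.elim_inl, h2] at this
      omega
    · have := h1 π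
      rw [h, Sum.elim_inr, h3] at this
      omega

theorem sumRevSum_surjective (m : ℕ) : Function.Surjective (sumRevSum m) := by
  rintro ⟨ν, hν⟩
  have ⟨hinv, h312, h4321⟩ := hν
  have hk := Perm.le_val_apply_last_add_two hinv h312 h4321
  have hk' := (ν (Fin.last (m + 2))).is_lt
  set k : ℕ := (ν (Fin.last (m + 2)) : ℕ)
  rcases (by omega : k = m + 2 ∨ k = m + 1 ∨ k = m) with h | h | h
  · obtain ⟨π, rfl⟩ := Perm.exists_sumRev_eq_of_avoids312 (m := m + 2) (t := 0) hinv h312 h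
    exact ⟨.inl ⟨π, (Perm.isAvoidingInvolution_sumRev_iff π (by norm_num)).1 hν⟩, rfl⟩
  · obtain ⟨π, rfl⟩ := Perm.exists_sumRev_eq_of_avoids312 (m := m + 1) (t := 1) hinv h312 h
    exact ⟨.inr (.inl ⟨π, (Perm.isAvoidingInvolution_sumRev_iff π (by norm_num)).1 hν⟩), rfl⟩
  · obtain ⟨π, rfl⟩ := Perm.exists_sumRev_eq_of_avoids312 (m := m) (t := 2) hinv h312 h
    exact ⟨.inr (.inr ⟨π, (Perm.isAvoidingInvolution_sumRev_iff π le_rfl).1 hν⟩), rfl⟩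

end AvoidingInvolution

theorem i_add_three (m : ℕ) : i (m + 3) = i (m + 2) + i (m + 1) + i m := by
  have := Nat.card_congr (Equiv.ofBijective _
    ⟨AvoidingInvolution.sumRevSum_injective m, AvoidingInvolution.sumRevSum_surjective m⟩)
  rw [Nat.card_sum, Nat.card_sum, ← add_assoc] at this
  exact this.symm

theorem statement10 :
    i 1 = 1 ∧ i 2 = 2 ∧ i 3 = 4 ∧
      ∀ n : ℕ, 4 ≤ n → i n = i (n - 1) + i (n - 2) + i (n - 3) := by
  have initial : i 1 = 1 ∧ i 2 = 2 ∧ i 3 = 4 := by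
    simp only [i, AvoidsPat, containsPat_312_iff, containsPat_4321_iff, Nat.card_eq_fintype_card]
    decide
  refine ⟨initial.1, initial.2.1, initial.2.2, fun n hn => ?_⟩
  obtain ⟨m, rfl⟩ : ∃ m, n = m + 3 := ⟨n - 3, by omega⟩
  exact i_add_three m
end

section
/- Let n ≥ 1 and let π ∈ S_n avoid both 321 and 4123. If π_i = n, then i ∈ {n-2, n-1, n}. -/
open Equiv

/-!
If `n` sat at position `i` with three entries after it, each of those entries is smaller than `n`,
so 321-avoidance forces them to increase; together with `n` in front they form a 4123.
-/

theorem containsPat_321 {n : ℕ} (π : Perm (Fin n)) {a b c : Fin n} (hab : a < b) (hbc : b < c)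
    (hπab : π b < π a) (hπbc : π c < π b) : ContainsPat π ![3, 2, 1] := by
  refine ⟨![a, b, c], Fin.strictMono_iff_lt_succ.2 fun x => ?_, fun x y => ?_⟩
  · fin_cases x <;> simpa
  · fin_cases x <;> fin_cases y <;> simp <;> order

theorem containsPat_4123 {n : ℕ} (π : Perm (Fin n)) {a b c d : Fin n} (hab : a < b) (hbc : b < c)
    (hcd : c < d) (hπbc : π b < π c) (hπcd : π c < π d) (hπda : π d < π a) :
    ContainsPat π ![4, 1, 2, 3] := by
  refine ⟨![a, b, c, d], Fin.strictMono_iff_lt_succ.2 fun x => ?_, fun x y => ?_⟩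
  · fin_cases x <;> simpa
  · fin_cases x <;> fin_cases y <;> simp <;> order

theorem apply_lt_apply_of_avoidsPat_321 {n : ℕ} {π : Perm (Fin n)} (h : AvoidsPat π ![3, 2, 1])
    {a b c : Fin n} (hab : a < b) (hbc : b < c) (hπab : π b < π a) : π b < π c :=
  (π.injective.ne hbc.ne).lt_of_le <|
    le_of_not_gt fun hπbc => h (containsPat_321 π hab hbc hπab hπbc)

theorem Fin.lt_of_ne_of_val_eq_sub_one {n : ℕ} {x y : Fin n} (hy : (y : ℕ) = n - 1)
    (hxy : x ≠ y) : x < y := by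
  have := Fin.val_ne_of_ne hxy
  omega

/-- Positions and values are 0-indexed: `π i = n - 1` is `π_(i+1) = n`, and the conclusion
reads `i + 1 ∈ {n-2, n-1, n}`. -/
theorem statement14_general (n : ℕ) (π : Perm (Fin n))
    (h1 : AvoidsPat π ![3,2,1]) (h2 : AvoidsPat π ![4,1,2,3])
    (i : Fin n) (hi : (π i : ℕ) = n - 1) :
    (i : ℕ) = n - 3 ∨ (i : ℕ) = n - 2 ∨ (i : ℕ) = n - 1 := by
  by_contra! hfar
  have hmax : ∀ x, x ≠ i → π x < π i := fun x hx =>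
    Fin.lt_of_ne_of_val_eq_sub_one hi (π.injective.ne hx)
  let b : Fin n := ⟨i + 1, by omega⟩
  let c : Fin n := ⟨i + 2, by omega⟩
  let d : Fin n := ⟨i + 3, by omega⟩
  have hib : i < b := Fin.lt_def.2 (by simp [b])
  have hbc : b < c := Fin.lt_def.2 (by simp [b, c])
  have hcd : c < d := Fin.lt_def.2 (by simp [c, d])
  have hπbc := apply_lt_apply_of_avoidsPat_321 h1 hib hbc (hmax b hib.ne')
  have hπcd := apply_lt_apply_of_avoidsPat_321 h1 (hib.trans hbc) hcd (hmax c (hib.trans hbc).ne')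
  exact h2 (containsPat_4123 π hib hbc hcd hπbc hπcd (hmax d (hib.trans hbc |>.trans hcd).ne'))

/-- If `π ∈ S_n` avoids 321 and 4123 and `π_i = n` (in one-line notation), then
`i ∈ {n-2, n-1, n}`; here positions and values are 0-indexed, so `π i = n - 1`
corresponds to `π_(i+1) = n` and the conclusion to `i + 1 ∈ {n-2, n-1, n}`. -/
theorem statement14 (n : ℕ) (hn : 1 ≤ n) (π : Perm (Fin n))
    (h1 : AvoidsPat π ![3,2,1]) (h2 : AvoidsPat π ![4,1,2,3])
    (i : Fin n) (hi : (π i : ℕ) = n - 1) :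
    (i : ℕ) = n - 3 ∨ (i : ℕ) = n - 2 ∨ (i : ℕ) = n - 1 :=
  statement14_general n π h1 h2 i hi
end

section
/- Let f_n = |Av_n(321, 4123)|, with the convention f_0 = 1. Then for all n ≥ 4, f_n = 2 f_{n-1} + 2 f_{n-2} - f_{n-3}. -/
open Equiv

/-- `f n` = number of permutations in `Av_n(321, 4123)`. -/
noncomputable def f (n : ℕ) : ℕ :=
  Nat.card {π : Perm (Fin n) // AvoidsPat π ![3,2,1] ∧ AvoidsPat π ![4,1,2,3]}

/-!
Write `a n` for the number of avoiders of length `n`. In an avoider the maximum is followed by at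
most two entries, and these increase: a `21` after it gives `321`, three entries after it give
`321` or `4123`. Deleting the maximum, avoiders with the maximum in last or penultimate position
correspond to all avoiders of length `n - 1`, and those with the maximum in antepenultimate
position to the avoiders of length `n - 1` ending in an ascent. A `321`-avoider ends in a descent
exactly when its maximum is penultimate, so `a n = 3 a (n - 1) - a (n - 2)` for `n ≥ 3`, and
subtracting two consecutive instances gives the theorem.
-/

open Finset

section Patterns

variable {m k : ℕ}

lemma containsPat_321_s15 {π : Perm (Fin m)} {i j k : Fin m} (hij : i < j) (hjk : j < k)
    (h₁ : π j < π i) (h₂ : π k < π j) : ContainsPat π ![3,2,1] := by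
  refine ⟨![i, j, k], fun a b hab => ?_, fun a b => ?_⟩
  · fin_cases a <;> fin_cases b <;> simp_all [hij.trans hjk]
  · fin_cases a <;> fin_cases b <;> simp_all [Fin.lt_asymm, h₂.trans h₁]

lemma containsPat_4123_s15 {π : Perm (Fin m)} {i j k l : Fin m}
    (hij : i < j) (hjk : j < k) (hkl : k < l)
    (h₁ : π j < π k) (h₂ : π k < π l) (h₃ : π l < π i) : ContainsPat π ![4,1,2,3] := by
  refine ⟨![i, j, k, l], fun a b hab => ?_, fun a b => ?_⟩
  · fin_cases a <;> fin_cases b <;>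
      simp_all [hij.trans hjk, hjk.trans hkl, hij.trans (hjk.trans hkl)]
  · fin_cases a <;> fin_cases b <;>
      simp_all [Fin.lt_asymm, h₁.trans h₂, h₂.trans h₃, h₁.trans (h₂.trans h₃)]

lemma Fin.val_add_le_of_strictMono {f : Fin (k + 1) → Fin (m + 1)} (hf : StrictMono f) :
    (f 0 : ℕ) + k ≤ m := by
  have key : ∀ i : Fin (k + 1), (f 0 : ℕ) + i ≤ f i := by
    refine Fin.induction (by simp) fun i ih => ?_
    have := hf (Fin.castSucc_lt_succ (i := i))
    simp only [Fin.val_succ, Fin.val_castSucc] at ih ⊢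
    omega
  simpa using (key (Fin.last k)).trans (Nat.lt_succ_iff.mp (f (Fin.last k)).isLt)

end Patterns

section InsertMax

variable {m k : ℕ}

def insertMax (j : Fin (m + 1)) (π : Perm (Fin m)) : Perm (Fin (m + 1)) :=
  (finSuccEquiv' j).trans ((optionCongr π).trans (finSuccEquiv' (Fin.last m)).symm)

@[simp] lemma insertMax_self (j : Fin (m + 1)) (π : Perm (Fin m)) :
    insertMax j π j = Fin.last m := by
  simp [insertMax]

@[simp] lemma insertMax_succAbove (j : Fin (m + 1)) (π : Perm (Fin m)) (i : Fin m) :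
    insertMax j π (j.succAbove i) = (π i).castSucc := by
  simp [insertMax, Fin.succAbove_last]

lemma insertMax_injective (j : Fin (m + 1)) : Function.Injective (insertMax (m := m) j) :=
  fun π π' h => Equiv.ext fun i => Fin.castSucc_injective _ <| by
    simpa using DFunLike.congr_fun h (j.succAbove i)

lemma exists_insertMax_eq {j : Fin (m + 1)} {π : Perm (Fin (m + 1))} (h : π j = Fin.last m) :
    ∃ π', insertMax j π' = π := by
  set e := (finSuccEquiv' j).symm.trans (π.trans (finSuccEquiv' (Fin.last m)))
  have he : e none = none := by simp [e, h]
  have : optionCongr (removeNone e) = e := by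
    ext1 x
    cases x with
    | none => simp [he]
    | some x =>
      obtain ⟨y, hy⟩ := Option.ne_none_iff_exists'.mp
        fun hx => Option.some_ne_none x (e.injective (hx.trans he.symm))
      rw [optionCongr_apply, Option.map_some, removeNone_some e ⟨y, hy⟩]
  refine ⟨removeNone e, Equiv.ext fun x => ?_⟩
  simp [insertMax, this, e]

variable (j : Fin (m + 1)) {π : Perm (Fin m)} {σ : Fin k → ℕ}

lemma ContainsPat.insertMax (h : ContainsPat π σ) : ContainsPat (insertMax j π) σ := by
  obtain ⟨f, hf, hσf⟩ := h
  refine ⟨fun a => j.succAbove (f a), (Fin.strictMono_succAbove j).comp hf, fun a b => ?_⟩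
  rw [hσf, insertMax_succAbove, insertMax_succAbove, Fin.castSucc_lt_castSucc_iff]

lemma ContainsPat.of_insertMax {σ : Fin (k + 1) → ℕ} (hσ : ∀ a ≠ 0, σ a < σ 0)
    (h : ContainsPat (_root_.insertMax j π) σ) :
    ContainsPat π σ ∨ ∃ f : Fin (k + 1) → Fin (m + 1), StrictMono f ∧ f 0 = j ∧
      ∀ a b, σ a < σ b ↔ _root_.insertMax j π (f a) < _root_.insertMax j π (f b) := by
  obtain ⟨f, hf, hσf⟩ := h
  by_cases hj : ∃ a, f a = j
  · obtain ⟨a, ha⟩ := hj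
    obtain rfl : a = 0 := by
      by_contra ha0
      have := (hσf a 0).1 (hσ a ha0)
      rw [ha, insertMax_self] at this
      exact (Fin.le_last _).not_gt this
    exact Or.inr ⟨f, hf, ha, hσf⟩
  · simp only [not_exists] at hj
    choose g hg using fun a => Fin.exists_succAbove_eq (hj a)
    refine Or.inl ⟨g, fun a b hab => ?_, fun a b => ?_⟩
    · exact (Fin.strictMono_succAbove j).lt_iff_lt.1 (by rw [hg, hg]; exact hf hab)
    · rw [hσf, ← hg a, ← hg b, insertMax_succAbove, insertMax_succAbove,
        Fin.castSucc_lt_castSucc_iff]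

/-- A pattern whose largest entry comes first cannot use the inserted maximum when fewer than
`k` positions follow it. -/
lemma avoidsPat_insertMax_iff {σ : Fin (k + 1) → ℕ} (hσ : ∀ a ≠ 0, σ a < σ 0)
    (hj : m < j + k) : AvoidsPat (insertMax j π) σ ↔ AvoidsPat π σ := by
  refine ⟨fun h h' => h (h'.insertMax j), fun h h' => ?_⟩
  rcases h'.of_insertMax j hσ with h' | ⟨f, hf, hf0, -⟩
  · exact h h'
  · have := Fin.val_add_le_of_strictMono hf
    rw [hf0] at this
    omega

end InsertMax

section Avoiders

variable {m : ℕ}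

def Avoids321And4123 {n : ℕ} (π : Perm (Fin n)) : Prop :=
  AvoidsPat π ![3,2,1] ∧ AvoidsPat π ![4,1,2,3]

lemma avoids_insertMax_iff_of_le {j : Fin (m + 1)} (hj : m ≤ j + 1) (π : Perm (Fin m)) :
    Avoids321And4123 (insertMax j π) ↔ Avoids321And4123 π :=
  and_congr (avoidsPat_insertMax_iff j (by decide) (by omega))
    (avoidsPat_insertMax_iff j (by decide) (by omega))

lemma avoidsPat321_insertMax_antepenult_iff (π : Perm (Fin (m + 2))) :
    AvoidsPat (insertMax (Fin.last m).castSucc.castSucc π) ![3,2,1] ↔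
      AvoidsPat π ![3,2,1] ∧ π (Fin.last m).castSucc < π (Fin.last (m + 1)) := by
  set j := (Fin.last m).castSucc.castSucc
  have hpen : j.succAbove (Fin.last m).castSucc = (Fin.last (m + 1)).castSucc :=
    Fin.succAbove_of_le_castSucc _ _ le_rfl
  have hlast : j.succAbove (Fin.last (m + 1)) = Fin.last (m + 2) :=
    Fin.succAbove_of_le_castSucc _ _ (Fin.castSucc_le_castSucc_iff.2 (Fin.le_last _))
  constructor
  · intro h
    refine ⟨fun h' => h (h'.insertMax j), not_le.1 fun hle => h ?_⟩
    have hlt : π (Fin.last (m + 1)) < π (Fin.last m).castSucc :=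
      hle.lt_of_ne (π.injective.ne (Fin.castSucc_lt_last _).ne')
    refine containsPat_321_s15 (i := j) (j := j.succAbove (Fin.last m).castSucc)
      (k := j.succAbove (Fin.last (m + 1))) ?_ ?_ ?_ ?_
    · rw [hpen]; exact Fin.castSucc_lt_castSucc_iff.2 (Fin.castSucc_lt_last _)
    · rw [hpen, hlast]; exact Fin.castSucc_lt_last _
    · rw [insertMax_succAbove, insertMax_self]; exact Fin.castSucc_lt_last _
    · rw [insertMax_succAbove, insertMax_succAbove]; exact Fin.castSucc_lt_castSucc_iff.2 hlt
  · rintro ⟨h, hasc⟩ h'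
    rcases h'.of_insertMax j (by decide) with h' | ⟨f, hf, hf0, hσf⟩
    · exact h h'
    have hv : (f 1 : ℕ) = m + 1 ∧ (f 2 : ℕ) = m + 2 := by
      have h01 : (j : ℕ) < f 1 := hf0 ▸ hf (show (0 : Fin 3) < 1 by decide)
      have h12 : (f 1 : ℕ) < f 2 := hf (show (1 : Fin 3) < 2 by decide)
      have := (f 2).isLt
      simp only [j, Fin.val_castSucc, Fin.val_last] at h01
      omega
    have hf1 : f 1 = j.succAbove (Fin.last m).castSucc := by rw [hpen]; ext; simp [hv.1]
    have hf2 : f 2 = j.succAbove (Fin.last (m + 1)) := by rw [hlast]; ext; simp [hv.2]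
    have hdesc := (hσf 2 1).1 (by decide)
    rw [hf1, hf2, insertMax_succAbove, insertMax_succAbove,
      Fin.castSucc_lt_castSucc_iff] at hdesc
    exact hasc.not_gt hdesc

lemma avoids_insertMax_antepenult_iff (π : Perm (Fin (m + 2))) :
    Avoids321And4123 (insertMax (Fin.last m).castSucc.castSucc π) ↔
      Avoids321And4123 π ∧ π (Fin.last m).castSucc < π (Fin.last (m + 1)) := by
  rw [Avoids321And4123, Avoids321And4123, avoidsPat321_insertMax_antepenult_iff,
    avoidsPat_insertMax_iff _ (by decide) (by simp)]
  tauto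

lemma apply_lt_last_of_ne {π : Perm (Fin (m + 1))} {j x : Fin (m + 1)} (hj : π j = Fin.last m)
    (hx : x ≠ j) : π x < Fin.last m :=
  (Fin.le_last _).lt_of_ne (hj ▸ π.injective.ne hx)

/-- Three entries after the maximum contain a `21`, giving `321`, or form a `123`, giving `4123`. -/
lemma not_avoids_of_apply_eq_last {π : Perm (Fin (m + 1))} {j : Fin (m + 1)}
    (hj : π j = Fin.last m) (h : j + 3 ≤ m) : ¬ Avoids321And4123 π := by
  rintro ⟨h321, h4123⟩
  let x : Fin 4 → Fin (m + 1) := fun i => ⟨j + i, by omega⟩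
  have hx : StrictMono x := fun a b hab => Nat.add_lt_add_left hab _
  have hx0 : π (x 0) = Fin.last m := hj
  have hlt (i : Fin 4) (hi : i ≠ 0) : π (x i) < π (x 0) :=
    hx0 ▸ apply_lt_last_of_ne hj (hx.injective.ne hi)
  have hne (a b : Fin 4) (hab : a < b) : π (x a) ≠ π (x b) := π.injective.ne (hx hab).ne
  rcases (hne 1 2 (by decide)).lt_or_gt with h12 | h21
  · rcases (hne 2 3 (by decide)).lt_or_gt with h23 | h32
    · exact h4123 (containsPat_4123_s15 (hx (by decide : (0 : Fin 4) < 1)) (hx (by decide))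
        (hx (by decide)) h12 h23 (hlt 3 (by decide)))
    · exact h321 (containsPat_321_s15 (hx (by decide : (0 : Fin 4) < 2)) (hx (by decide))
        (hlt 2 (by decide)) h32)
  · exact h321 (containsPat_321_s15 (hx (by decide : (0 : Fin 4) < 1)) (hx (by decide))
      (hlt 1 (by decide)) h21)

lemma apply_eq_last_iff_of_avoidsPat321 {π : Perm (Fin (m + 2))} (h : AvoidsPat π ![3,2,1]) :
    π (Fin.last m).castSucc = Fin.last (m + 1) ↔
      π (Fin.last (m + 1)) < π (Fin.last m).castSucc := by
  refine ⟨fun hpen => hpen ▸ apply_lt_last_of_ne hpen (Fin.castSucc_lt_last _).ne',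
    fun hdesc => ?_⟩
  by_contra hpen
  obtain ⟨i, hi⟩ := π.surjective (Fin.last (m + 1))
  have hi_pen : i ≠ (Fin.last m).castSucc := fun h => hpen (h ▸ hi)
  have hi_last : i ≠ Fin.last (m + 1) := by
    rintro rfl
    exact (Fin.le_last _).not_gt (hi ▸ hdesc)
  have hi_lt : i < (Fin.last m).castSucc := by
    simp only [Ne, Fin.ext_iff, Fin.val_castSucc, Fin.val_last] at hi_pen hi_last
    rw [Fin.lt_def, Fin.val_castSucc, Fin.val_last]
    omega
  exact h (containsPat_321_s15 hi_lt (Fin.castSucc_lt_last _)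
    (hi ▸ apply_lt_last_of_ne hi hi_pen.symm) hdesc)

end Avoiders

section Counting

variable {m : ℕ}

open Classical

noncomputable def avoiders (n : ℕ) : Finset (Perm (Fin n)) := univ.filter Avoids321And4123

lemma f_eq_card_avoiders (n : ℕ) : f n = #(avoiders n) := by
  rw [f, ← Nat.card_eq_finsetCard]
  simp [avoiders, Avoids321And4123]

noncomputable def avoidersMaxAt (j : Fin (m + 1)) : Finset (Perm (Fin (m + 1))) :=
  (avoiders (m + 1)).filter (· j = Fin.last m)

lemma card_avoiders_eq_sum (m : ℕ) :
    #(avoiders (m + 1)) = ∑ j : Fin (m + 1), #(avoidersMaxAt j) := by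
  rw [card_eq_sum_card_fiberwise (f := fun π : Perm (Fin (m + 1)) => π.symm (Fin.last m))
    (t := univ) fun _ _ => mem_univ _]
  refine sum_congr rfl fun j _ => congrArg card (filter_congr fun π _ => ?_)
  rw [Equiv.symm_apply_eq, eq_comm]

lemma card_avoidersMaxAt {j : Fin (m + 1)} (Q : Perm (Fin m) → Prop) [DecidablePred Q]
    (hQ : ∀ π, Avoids321And4123 (insertMax j π) ↔ Q π) :
    #(avoidersMaxAt j) = #(univ.filter Q) := by
  symm
  refine card_bij (fun π _ => insertMax j π) (fun π hπ => ?_)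
    (fun _ _ _ _ h => insertMax_injective j h) (fun π hπ => ?_)
  · simp only [avoidersMaxAt, avoiders, mem_filter, mem_univ, true_and] at hπ ⊢
    exact ⟨(hQ π).2 hπ, insertMax_self j π⟩
  · simp only [avoidersMaxAt, avoiders, mem_filter, mem_univ, true_and] at hπ
    obtain ⟨π', rfl⟩ := exists_insertMax_eq hπ.2
    exact ⟨π', by simpa [hQ] using hπ.1, rfl⟩

lemma card_avoidersMaxAt_of_le {j : Fin (m + 1)} (hj : m ≤ j + 1) :
    #(avoidersMaxAt j) = #(avoiders m) :=
  card_avoidersMaxAt _ (avoids_insertMax_iff_of_le hj)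

lemma card_avoidersMaxAt_antepenult (m : ℕ) :
    #(avoidersMaxAt (Fin.last m).castSucc.castSucc) =
      #((avoiders (m + 2)).filter fun π => π (Fin.last m).castSucc < π (Fin.last (m + 1))) := by
  rw [card_avoidersMaxAt _ avoids_insertMax_antepenult_iff, avoiders, filter_filter]

lemma avoidersMaxAt_eq_empty {j : Fin (m + 1)} (hj : j + 3 ≤ m) : avoidersMaxAt j = ∅ :=
  filter_eq_empty_iff.2 fun _ hπ h => not_avoids_of_apply_eq_last h hj (mem_filter.1 hπ).2

lemma card_filter_ascent_add_card_avoiders (m : ℕ) :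
    #((avoiders (m + 2)).filter fun π => π (Fin.last m).castSucc < π (Fin.last (m + 1))) +
      #(avoiders (m + 1)) = #(avoiders (m + 2)) := by
  have hdesc :
      (avoiders (m + 2)).filter (fun π => ¬ π (Fin.last m).castSucc < π (Fin.last (m + 1))) =
        avoidersMaxAt (Fin.last m).castSucc := by
    refine filter_congr fun π hπ => ?_
    rw [apply_eq_last_iff_of_avoidsPat321 (mem_filter.1 hπ).2.1, not_lt]
    exact (le_iff_lt_or_eq).trans (or_iff_left (π.injective.ne (Fin.castSucc_lt_last _).ne'))
  rw [← card_avoidersMaxAt_of_le (j := (Fin.last m).castSucc) (by simp), ← hdesc,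
    card_filter_add_card_filter_not]

lemma card_avoiders_add_card_avoiders (k : ℕ) :
    #(avoiders (k + 3)) + #(avoiders (k + 1)) = 3 * #(avoiders (k + 2)) := by
  rw [card_avoiders_eq_sum, Fin.sum_univ_castSucc, Fin.sum_univ_castSucc, Fin.sum_univ_castSucc,
    sum_eq_zero fun i _ => by rw [avoidersMaxAt_eq_empty (by simp), card_empty],
    card_avoidersMaxAt_antepenult,
    card_avoidersMaxAt_of_le (j := (Fin.last (k + 1)).castSucc) (by simp),
    card_avoidersMaxAt_of_le (j := Fin.last (k + 2)) (by simp),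
    ← card_filter_ascent_add_card_avoiders k]
  ring

end Counting

theorem statement15 (n : ℕ) (hn : 4 ≤ n) :
    (f n : ℤ) = 2 * f (n - 1) + 2 * f (n - 2) - f (n - 3) := by
  obtain ⟨k, rfl⟩ : ∃ k, n = k + 4 := ⟨n - 4, by omega⟩
  have h₁ : #(avoiders (k + 4)) + #(avoiders (k + 2)) = 3 * #(avoiders (k + 3)) :=
    card_avoiders_add_card_avoiders (k + 1)
  have h₀ := card_avoiders_add_card_avoiders k
  simp only [f_eq_card_avoiders, show k + 4 - 1 = k + 3 from rfl, show k + 4 - 2 = k + 2 from rfl,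
    show k + 4 - 3 = k + 1 from rfl]
  omega
end

section
/- Let j_n = |I_n(321, 4123)| be the number of involutions in S_n avoiding 321 and 4123, with the convention j_0 = 1. Then for all n ≥ 5, j_n = j_{n-1} + j_{n-2} + j_{n-4} (with j_1 = 1, j_2 = 2, j_3 = 3, j_4 = 6). -/
open Equiv

/-- `j n` = number of involutions in `S_n` avoiding 321 and 4123. -/
noncomputable def j (n : ℕ) : ℕ :=
  Nat.card {π : Perm (Fin n) // π = π⁻¹ ∧ AvoidsPat π ![3,2,1] ∧ AvoidsPat π ![4,1,2,3]}


/-!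
Let `π ∈ I_n(321, 4123)` and `v = π(n)`. If `v ≤ n - 3`, then `π(v) = n`, so every entry at a
position strictly between `v` and `n` lies below `v` (otherwise it would form a 321 with `v` and
`n`); the entries at positions `v + 1` and `v + 2` then form a 321 or, together with positions `v`
and `n`, a 4123. Hence `π(n) ∈ {n, n - 1, n - 2}`, and a similar argument at position `n - 1`
shows that `π(n) = n - 2` forces `π(n - 1) = n - 3`. So `π` is a direct sum `π' ⊕ β` with
`β ∈ {1, 21, 3412}`. Since 321 and 4123 both start with their largest entry, an occurrence of
either in a direct sum lies inside one summand, so `π' ⊕ β` is in the class iff `π'` is, which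
gives `j_n = j_{n-1} + j_{n-2} + j_{n-4}`.
-/

theorem Nat.card_subtype_eq_add_add {α : Type*} [Finite α] {p : α → Prop} (f : α → ℕ)
    {a b c : ℕ} (hab : a ≠ b) (hac : a ≠ c) (hbc : b ≠ c)
    (h : ∀ x, p x → f x = a ∨ f x = b ∨ f x = c) :
    Nat.card {x // p x} = Nat.card {x // p x ∧ f x = a} + Nat.card {x // p x ∧ f x = b} +
      Nat.card {x // p x ∧ f x = c} := by
  classical
  have hsplit : ∀ x, p x ↔ (p x ∧ f x = a) ∨ (p x ∧ f x = b) ∨ (p x ∧ f x = c) := fun x =>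
    ⟨fun hx => by rcases h x hx with h' | h' | h' <;> simp [hx, h'],
      by rintro (h' | h' | h') <;> exact h'.1⟩
  rw [Nat.card_congr ((Equiv.subtypeEquivRight hsplit).trans (subtypeOrEquiv _ _ ?_)),
    Nat.card_sum, Nat.card_congr (subtypeOrEquiv _ _ ?_), Nat.card_sum, add_assoc]
  · exact fun r hb hc x hx => hbc ((hb x hx).2.symm.trans (hc x hx).2)
  · exact fun r ha hbc' x hx => (hbc' x hx).elim (fun hb => hab ((ha x hx).2.symm.trans hb.2))
      fun hc => hac ((ha x hx).2.symm.trans hc.2)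

section Occurrences

variable {n m l : ℕ} {ρ : Perm (Fin n)} {π : Perm (Fin m)} {σ : Fin l → ℕ}

theorem ContainsPat.of_semiconj (e e' : Fin m ↪o Fin n) (h : ∀ i, ρ (e i) = e' (π i))
    (hπ : ContainsPat π σ) : ContainsPat ρ σ := by
  obtain ⟨g, hg, hσ⟩ := hπ
  exact ⟨e ∘ g, e.strictMono.comp hg, fun a b => by simp [h, hσ]⟩

theorem ContainsPat.of_semiconj_of_mem_range (e e' : Fin m ↪o Fin n)
    (h : ∀ i, ρ (e i) = e' (π i)) {f : Fin l → Fin n} (hf : StrictMono f)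
    (hσ : ∀ a b, σ a < σ b ↔ ρ (f a) < ρ (f b)) (hrange : ∀ a, f a ∈ Set.range e) :
    ContainsPat π σ := by
  choose g hg using hrange
  obtain rfl : f = e ∘ g := funext fun a => (hg a).symm
  exact ⟨g, fun a b hab => e.lt_iff_lt.mp (hf hab), fun a b => by simpa [h] using hσ a b⟩

variable {a b c d : Fin n}

theorem AvoidsPat.not_321 (h : AvoidsPat ρ ![3,2,1]) (hab : a < b) (hbc : b < c)
    (hba : ρ b < ρ a) (hcb : ρ c < ρ b) : False := by
  refine h ⟨![a, b, c], Fin.strictMono_iff_lt_succ.2 fun i => ?_, fun x y => ?_⟩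
  · fin_cases i <;> simpa
  · have hca := hcb.trans hba
    fin_cases x <;> fin_cases y <;> simp [hba, hcb, hca, hba.le, hcb.le, hca.le]

theorem AvoidsPat.not_4123 (h : AvoidsPat ρ ![4,1,2,3]) (hab : a < b) (hbc : b < c) (hcd : c < d)
    (hbc' : ρ b < ρ c) (hcd' : ρ c < ρ d) (hda : ρ d < ρ a) : False := by
  refine h ⟨![a, b, c, d], Fin.strictMono_iff_lt_succ.2 fun i => ?_, fun x y => ?_⟩
  · fin_cases i <;> simpa
  · have hbd := hbc'.trans hcd'
    have hca := hcd'.trans hda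
    have hba := hbd.trans hda
    fin_cases x <;> fin_cases y <;>
      simp [hbc', hcd', hda, hbd, hca, hba, hbc'.le, hcd'.le, hda.le, hbd.le, hca.le, hba.le]

theorem AvoidsPat.lt_or_lt_of_321 (h : AvoidsPat ρ ![3,2,1]) (hab : a < b) (hbc : b < c) :
    ρ b < ρ c ∨ ρ a < ρ b := by
  by_contra! hb
  exact h.not_321 hab hbc (hb.2.lt_of_ne (ρ.injective.ne hab.ne'))
    (hb.1.lt_of_ne (ρ.injective.ne hbc.ne'))

end Occurrences

namespace Equiv.Perm

theorem apply_apply_of_eq_inv_s19 {α : Type*} {π : Perm α} (h : π = π⁻¹) (x : α) : π (π x) = x :=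
  (DFunLike.congr_fun h (π x)).trans (π.symm_apply_apply x)

variable {m k l : ℕ} {π π' : Perm (Fin m)} {β β' : Perm (Fin k)}

def directSum (π : Perm (Fin m)) (β : Perm (Fin k)) : Perm (Fin (m + k)) :=
  finSumFinEquiv.permCongr (π.sumCongr β)

@[simp]
theorem directSum_castAdd (i : Fin m) :
    π.directSum β (Fin.castAdd k i) = Fin.castAdd k (π i) := by
  simp [directSum, permCongr_apply]

@[simp]
theorem directSum_natAdd (t : Fin k) :
    π.directSum β (Fin.natAdd m t) = Fin.natAdd m (β t) := by
  simp [directSum, permCongr_apply]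

theorem directSum_inv : (π.directSum β)⁻¹ = π⁻¹.directSum β⁻¹ := rfl

theorem directSum_inj : π.directSum β = π'.directSum β' ↔ π = π' ∧ β = β' := by
  refine ⟨fun h => ⟨Equiv.ext fun x => ?_, Equiv.ext fun t => ?_⟩, fun h => h.1 ▸ h.2 ▸ rfl⟩
  · simpa using DFunLike.congr_fun h (Fin.castAdd k x)
  · simpa using DFunLike.congr_fun h (Fin.natAdd m t)

theorem val_directSum_lt_iff (x : Fin (m + k)) : (π.directSum β x : ℕ) < m ↔ (x : ℕ) < m := by
  induction x using Fin.addCases <;> simp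

theorem containsPat_directSum_iff {σ : Fin (l + 1) → ℕ} (hσ : ∀ a, σ a ≤ σ 0) :
    ContainsPat (π.directSum β) σ ↔ ContainsPat π σ ∨ ContainsPat β σ := by
  have hleft : ∀ i, π.directSum β (Fin.castAddOrderEmb k i) = Fin.castAddOrderEmb k (π i) := by
    simp
  have hright : ∀ t, π.directSum β (Fin.natAddOrderEmb m t) = Fin.natAddOrderEmb m (β t) := by
    simp
  refine ⟨fun ⟨f, hf, hfσ⟩ => ?_, ?_⟩
  · by_cases h0 : (f 0 : ℕ) < m
    · have hle : ∀ a, π.directSum β (f a) ≤ π.directSum β (f 0) := fun a =>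
        not_lt.mp ((hfσ 0 a).not.mp (hσ a).not_gt)
      refine .inl (.of_semiconj_of_mem_range _ _ hleft hf hfσ fun a => ?_)
      have hfa : (f a : ℕ) < m := by
        rw [← val_directSum_lt_iff (π := π) (β := β)] at h0 ⊢
        exact lt_of_le_of_lt (hle a) h0
      exact ⟨(f a).castLT hfa, Fin.castAdd_castLT _ _ _⟩
    · refine .inr (.of_semiconj_of_mem_range _ _ hright hf hfσ fun a => ?_)
      change f a ∈ Set.range (Fin.natAdd m)
      rw [Fin.range_natAdd]
      exact (not_lt.mp h0).trans (hf.monotone (Fin.zero_le a))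
  · rintro (h | h)
    exacts [h.of_semiconj _ _ hleft, h.of_semiconj _ _ hright]

def EndsWith (σ : Perm (Fin (m + k))) (β : Perm (Fin k)) : Prop :=
  ∀ t, σ (Fin.natAdd m t) = Fin.natAdd m (β t)

theorem endsWith_directSum : EndsWith (π.directSum β) β := fun t => directSum_natAdd t

theorem EndsWith.exists_eq_directSum {σ : Perm (Fin (m + k))} (h : EndsWith σ β) :
    ∃ π : Perm (Fin m), σ = π.directSum β := by
  have hleft : ∀ i, ∃ i', σ (Fin.castAdd k i) = Fin.castAdd k i' := by
    intro i
    obtain ⟨x, hx⟩ : ∃ x, σ (Fin.castAdd k i) = x := ⟨_, rfl⟩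
    induction x using Fin.addCases with
    | left i' => exact ⟨i', hx⟩
    | right t =>
      rw [← β.apply_symm_apply t, ← h] at hx
      have := congrArg Fin.val (σ.injective hx)
      simp at this
      omega
  choose π₀ hπ₀ using hleft
  have hinj : Function.Injective π₀ := fun i i' hii' =>
    Fin.castAdd_injective _ _ (σ.injective (by rw [hπ₀, hπ₀, hii']))
  refine ⟨Equiv.ofBijective π₀ hinj.bijective_of_finite, Equiv.ext fun x => ?_⟩
  induction x using Fin.addCases <;> simp [hπ₀, h _]

theorem endsWith_one_iff {σ : Perm (Fin (m + 1))} :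
    EndsWith σ (1 : Perm (Fin 1)) ↔ (σ (Fin.last m) : ℕ) = m := by
  have hlast : Fin.natAdd m (0 : Fin 1) = Fin.last m := rfl
  simp [EndsWith, Fin.forall_fin_one, Fin.ext_iff, hlast]

theorem endsWith_swap_iff {σ : Perm (Fin (m + 2))} (hσ : σ = σ⁻¹) :
    EndsWith σ (swap 0 1) ↔ (σ (Fin.last (m + 1)) : ℕ) = m := by
  have hlast : Fin.natAdd m (1 : Fin 2) = Fin.last (m + 1) := rfl
  simp only [EndsWith, Fin.forall_fin_two, swap_apply_left, swap_apply_right, ← hlast]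
  refine ⟨fun h => by simpa [Fin.ext_iff] using h.2, fun h => ?_⟩
  have h1 : σ (Fin.natAdd m 1) = Fin.natAdd m 0 := Fin.ext (by simpa using h)
  exact ⟨by rw [← h1, apply_apply_of_eq_inv_s19 hσ], h1⟩

end Equiv.Perm

def IsI321_4123 {n : ℕ} (π : Perm (Fin n)) : Prop :=
  π = π⁻¹ ∧ AvoidsPat π ![3,2,1] ∧ AvoidsPat π ![4,1,2,3]

theorem j_eq (n : ℕ) : j n = Nat.card {π : Perm (Fin n) // IsI321_4123 π} := rfl

namespace IsI321_4123

open Equiv.Perm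

variable {m k n : ℕ}

theorem directSum_iff {π : Perm (Fin m)} {β : Perm (Fin k)} :
    IsI321_4123 (π.directSum β) ↔ IsI321_4123 π ∧ IsI321_4123 β := by
  simp only [IsI321_4123, AvoidsPat, directSum_inv, directSum_inj,
    containsPat_directSum_iff (by decide : ∀ a : Fin 3, ![3,2,1] a ≤ ![3,2,1] 0),
    containsPat_directSum_iff (by decide : ∀ a : Fin 4, ![4,1,2,3] a ≤ ![4,1,2,3] 0)]
  tauto

theorem card_endsWith {β : Perm (Fin k)} (hβ : IsI321_4123 β) :
    Nat.card {σ : Perm (Fin (m + k)) // IsI321_4123 σ ∧ σ.EndsWith β} = j m := by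
  refine (Nat.card_congr (Equiv.ofBijective
    (fun π : {π : Perm (Fin m) // IsI321_4123 π} =>
      ⟨π.1.directSum β, directSum_iff.2 ⟨π.2, hβ⟩, endsWith_directSum⟩) ⟨?_, ?_⟩)).symm
  · exact fun π π' h => Subtype.ext (directSum_inj.1 (congrArg Subtype.val h)).1
  · rintro ⟨σ, hσ, hend⟩
    obtain ⟨π, rfl⟩ := hend.exists_eq_directSum
    exact ⟨⟨π, (directSum_iff.1 hσ).1⟩, rfl⟩

theorem le_apply_last {π : Perm (Fin (n + 1))} (hπ : IsI321_4123 π) :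
    n ≤ (π (Fin.last n) : ℕ) + 2 := by
  set v := π (Fin.last n)
  have hv : π v = Fin.last n := apply_apply_of_eq_inv_s19 hπ.1 _
  by_contra! hvn
  have hvL : v < Fin.last n := Fin.lt_def.2 (by simp; omega)
  have hvv : v < π v := by rw [hv]; exact hvL
  have below : ∀ r, v < r → r < Fin.last n → π r < v := fun r hvr hrL =>
    (hπ.2.1.lt_or_lt_of_321 hvr hrL).resolve_right (hv ▸ (Fin.le_last _).not_gt)
  obtain ⟨p, hp⟩ : ∃ p : Fin (n + 1), (p : ℕ) = v + 1 := ⟨⟨v + 1, by omega⟩, rfl⟩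
  obtain ⟨q, hq⟩ : ∃ q : Fin (n + 1), (q : ℕ) = v + 2 := ⟨⟨v + 2, by omega⟩, rfl⟩
  have hvp : v < p := Fin.lt_def.2 (by omega)
  have hpq : p < q := Fin.lt_def.2 (by omega)
  have hqL : q < Fin.last n := Fin.lt_def.2 (by simp; omega)
  rcases lt_or_gt_of_ne (π.injective.ne hpq.ne) with hpq' | hqp'
  · exact hπ.2.2.not_4123 hvp hpq hqL hpq' (below q (hvp.trans hpq) hqL) hvv
  · exact hπ.2.1.not_321 hvp hpq ((below p hvp (hpq.trans hqL)).trans hvv) hqp'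

theorem apply_natAdd_two {π : Perm (Fin (m + 4))} (hπ : IsI321_4123 π)
    (h3 : π (Fin.natAdd m 3) = Fin.natAdd m 1) : π (Fin.natAdd m 2) = Fin.natAdd m 0 := by
  have h1 : π (Fin.natAdd m 1) = Fin.natAdd m 3 := by rw [← h3, apply_apply_of_eq_inv_s19 hπ.1]
  have h12 : Fin.natAdd m 1 < Fin.natAdd m (2 : Fin 4) := Fin.lt_def.2 (by simp)
  have h23 : Fin.natAdd m 2 < Fin.natAdd m (3 : Fin 4) := Fin.lt_def.2 (by simp)
  have hw : π (Fin.natAdd m 2) < π (Fin.natAdd m 3) :=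
    (hπ.2.1.lt_or_lt_of_321 h12 h23).resolve_right (by rw [h1, Fin.lt_def]; simp; omega)
  set w := π (Fin.natAdd m 2)
  have hwm : (w : ℕ) ≤ m := by rw [h3, Fin.lt_def] at hw; simpa [Nat.lt_succ_iff] using hw
  have hw2 : π w = Fin.natAdd m 2 := apply_apply_of_eq_inv_s19 hπ.1 _
  refine Fin.ext (le_antisymm (by simpa using hwm) (not_lt.1 fun hlt => ?_))
  obtain ⟨p, hp⟩ : ∃ p : Fin (m + 4), (p : ℕ) = w + 1 := ⟨⟨w + 1, by omega⟩, rfl⟩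
  have hwp : w < p := Fin.lt_def.2 (by omega)
  have hp2 : p < Fin.natAdd m 2 := Fin.lt_def.2 (by simp at hlt ⊢; omega)
  -- the only value above `m + 2` is `m + 3 = π (m + 1)`, and `p ≠ m + 1`
  have hpw : π p < w := (hπ.2.1.lt_or_lt_of_321 hwp hp2).resolve_right fun h2p => by
    have : π p = π (Fin.natAdd m 1) := by
      rw [h1]; exact Fin.ext (by rw [hw2, Fin.lt_def] at h2p; simp at h2p ⊢; omega)
    have := congrArg Fin.val (π.injective this)
    simp at this hlt
    omega
  exact hπ.2.2.not_4123 hwp hp2 h23 hpw hw (by rw [hw2, h3, Fin.lt_def]; simp)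

theorem endsWith_3412_iff {σ : Perm (Fin (m + 4))} (hσ : IsI321_4123 σ) :
    σ.EndsWith (swap 0 2 * swap 1 3) ↔ (σ (Fin.last (m + 3)) : ℕ) = m + 1 := by
  have hlast : Fin.natAdd m (3 : Fin 4) = Fin.last (m + 3) := rfl
  have hβ3 : (swap 0 2 * swap 1 3 : Perm (Fin 4)) 3 = 1 := by decide
  refine ⟨fun h => by simpa [← hlast, hβ3, Fin.ext_iff] using h 3, fun h => ?_⟩
  have h3 : σ (Fin.natAdd m 3) = Fin.natAdd m 1 := Fin.ext (by simpa [hlast] using h)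
  have h2 := hσ.apply_natAdd_two h3
  have h1 : σ (Fin.natAdd m 1) = Fin.natAdd m 3 := by rw [← h3, apply_apply_of_eq_inv_s19 hσ.1]
  have h0 : σ (Fin.natAdd m 0) = Fin.natAdd m 2 := by rw [← h2, apply_apply_of_eq_inv_s19 hσ.1]
  intro t
  fin_cases t
  exacts [h0, h1, h2, h3]

end IsI321_4123

section SmallCases

instance {n k : ℕ} (π : Perm (Fin n)) (σ : Fin k → ℕ) : Decidable (ContainsPat π σ) :=
  inferInstanceAs (Decidable (∃ f : Fin k → Fin n,
    (∀ ⦃a b : Fin k⦄, a < b → f a < f b) ∧ ∀ a b : Fin k, σ a < σ b ↔ π (f a) < π (f b)))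

instance {n : ℕ} (π : Perm (Fin n)) : Decidable (IsI321_4123 π) :=
  inferInstanceAs (Decidable (_ ∧ ¬ _ ∧ ¬ _))

theorem isI321_4123_one : IsI321_4123 (1 : Perm (Fin 1)) := by decide

theorem isI321_4123_swap : IsI321_4123 (swap 0 1 : Perm (Fin 2)) := by decide

set_option maxRecDepth 10000 in
theorem isI321_4123_3412 : IsI321_4123 (swap 0 2 * swap 1 3 : Perm (Fin 4)) := by decide

theorem j_zero_one_two_three : j 0 = 1 ∧ j 1 = 1 ∧ j 2 = 2 ∧ j 3 = 3 := by
  simp only [j_eq, Nat.card_eq_fintype_card]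
  decide

end SmallCases

theorem j_add_four (m : ℕ) : j (m + 4) = j (m + 3) + j (m + 2) + j m := by
  have hcard {k l : ℕ} {β : Perm (Fin k)} (hβ : IsI321_4123 β) {P : Perm (Fin (l + k)) → Prop}
      (hP : ∀ σ, IsI321_4123 σ → (σ.EndsWith β ↔ P σ)) :
      Nat.card {σ // IsI321_4123 σ ∧ P σ} = j l := by
    rw [← IsI321_4123.card_endsWith hβ]
    exact Nat.card_congr (Equiv.subtypeEquivRight fun σ => and_congr_right (hP σ)).symm
  rw [j_eq, Nat.card_subtype_eq_add_add (fun σ : Perm (Fin (m + 4)) => (σ (Fin.last (m + 3)) : ℕ))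
      (a := m + 3) (b := m + 2) (c := m + 1) (by omega) (by omega) (by omega) fun σ hσ => by
        have := hσ.le_apply_last; have := (σ (Fin.last (m + 3))).isLt; omega]
  rw [hcard isI321_4123_one fun σ _ => Perm.endsWith_one_iff,
    hcard isI321_4123_swap fun σ hσ => Perm.endsWith_swap_iff hσ.1,
    hcard isI321_4123_3412 fun σ hσ => hσ.endsWith_3412_iff]

theorem statement19 :
    j 1 = 1 ∧ j 2 = 2 ∧ j 3 = 3 ∧ j 4 = 6 ∧
      ∀ n : ℕ, 5 ≤ n → j n = j (n - 1) + j (n - 2) + j (n - 4) := by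
  obtain ⟨h0, h1, h2, h3⟩ := j_zero_one_two_three
  refine ⟨h1, h2, h3, by rw [j_add_four 0, h3, h2, h0], fun n hn => ?_⟩
  obtain ⟨m, rfl⟩ : ∃ m, n = m + 4 := ⟨n - 4, by omega⟩
  simpa using j_add_four m
end
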